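/- arXiv:math/0401237 — 11 statements merged into one kernel-verified Lean document; each statement's English description precedes it below -/
import Mathlib

section
/- For all natural numbers K and m, the sum over ℓ from 0 to K of (ℓ+1) * C(2K+m-ℓ, K-ℓ) equals C(2K+m+2, K), where C denotes the binomial coefficient. -/
open Finset

lemma hockey (r : ℕ) : ∀ n, ∑ j ∈ range (n + 1), Nat.choose (r + j) j = Nat.choose (r + n + 1) n := by
  intro n
  induction n with
  | zero => simp
  | succ n ih =>
    rw [sum_range_succ, ih]
    have : r + (n + 1) + 1 = (r + n + 1) + 1 := by ring
    rw [this, Nat.choose_succ_succ' (r + n + 1) n, show r + (n+1) = r + n + 1 by ring]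

lemma weighted (r : ℕ) : ∀ n, ∑ j ∈ range (n + 1), (n + 1 - j) * Nat.choose (r + j) j = Nat.choose (r + n + 2) n := by
  intro n
  induction n with
  | zero => simp
  | succ n ih =>
    have split : ∀ j ∈ range (n + 2), (n + 2 - j) * Nat.choose (r + j) j
        = (n + 1 - j) * Nat.choose (r + j) j + Nat.choose (r + j) j := by
      intro j hj
      simp only [mem_range] at hj
      have : n + 2 - j = (n + 1 - j) + 1 := by omega
      rw [this, add_mul, one_mul]
    rw [sum_congr rfl split, sum_add_distrib, hockey r (n + 1),
      sum_range_succ, Nat.sub_self, zero_mul, add_zero, ih]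
    have h1 : r + (n + 1) + 1 = (r + n + 2) := by ring
    have h2 : r + (n + 1) + 2 = (r + n + 2) + 1 := by ring
    rw [h1, h2, Nat.choose_succ_succ' (r + n + 2) n]

theorem typeA_substitution_identity (K m : ℕ) :
    ∑ ℓ ∈ range (K + 1), (ℓ + 1) * Nat.choose (2 * K + m - ℓ) (K - ℓ) =
      Nat.choose (2 * K + m + 2) K := by
  rw [← sum_range_reflect]
  have : ∀ j ∈ range (K + 1), (K + 1 - 1 - j + 1) * Nat.choose (2 * K + m - (K + 1 - 1 - j)) (K - (K + 1 - 1 - j))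
      = (K + 1 - j) * Nat.choose (K + m + j) j := by
    intro j hj
    simp only [mem_range] at hj
    have h1 : K + 1 - 1 - j = K - j := by omega
    have h2 : 2 * K + m - (K - j) = K + m + j := by omega
    have h3 : K - (K - j) = j := by omega
    have h4 : K - j + 1 = K + 1 - j := by omega
    rw [h1, h2, h3, h4]
  rw [sum_congr rfl this, weighted (K + m) K]
  congr 1
  omega
end

section
/- Define the bivariate polynomial F_{B_n}(x,y) = Σ_{k=0}^{n} Σ_{ℓ=0}^{n} C(n, k+ℓ) * C(n+k-1, n-1) * x^k y^ℓ. Then F_{B_n}(x,x) = Σ_{k=0}^{n} C(n,k) * C(n+k, k) * x^k. -/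
open Finset

/-- Substituting `y = x` in the type `B_n` F-triangle yields the f-vector of the
type `B_n` generalized associahedron. -/
theorem F_triangle_B_diagonal (n : ℕ) (hn : 1 ≤ n) (x : ℚ) :
    ∑ k ∈ range (n + 1), ∑ ℓ ∈ range (n + 1),
        ((Nat.choose n (k + ℓ) : ℚ)) * (Nat.choose (n + k - 1) (n - 1)) * x ^ k * x ^ ℓ =
      ∑ k ∈ range (n + 1),
        ((Nat.choose n k : ℚ)) * (Nat.choose (n + k) k) * x ^ k := by
  have key : ∀ m : ℕ, ∑ k ∈ range (m + 1), ((Nat.choose (n + k - 1) (n - 1) : ℚ))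
      = (Nat.choose (n + m) m : ℚ) := by
    intro m
    have h := Nat.sum_range_add_choose m (n - 1)
    have h2 : ∀ k, n + k - 1 = k + (n - 1) := fun k => by omega
    have h3 : m + (n - 1) + 1 = n + m := by omega
    rw [h3] at h
    have h4 : (n - 1) + 1 = n := by omega
    rw [h4] at h
    have h5 : Nat.choose (n + m) n = Nat.choose (n + m) m := by
      have := Nat.choose_symm (Nat.le_add_right n m)
      simpa using this.symm
    push_cast [← h5, ← h]
    exact Finset.sum_congr rfl fun k _ => by rw [h2 k]
  calc ∑ k ∈ range (n + 1), ∑ ℓ ∈ range (n + 1),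
        ((Nat.choose n (k + ℓ) : ℚ)) * (Nat.choose (n + k - 1) (n - 1)) * x ^ k * x ^ ℓ
      = ∑ p ∈ (range (n + 1)) ×ˢ (range (n + 1)),
          ((Nat.choose n (p.1 + p.2) : ℚ)) * (Nat.choose (n + p.1 - 1) (n - 1)) * x ^ p.1 * x ^ p.2 := by
        rw [Finset.sum_product]
    _ = ∑ p ∈ ((range (n + 1)) ×ˢ (range (n + 1))).filter (fun p => p.1 + p.2 ≤ n),
          ((Nat.choose n (p.1 + p.2) : ℚ)) * (Nat.choose (n + p.1 - 1) (n - 1)) * x ^ p.1 * x ^ p.2 := by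
        refine (Finset.sum_subset (Finset.filter_subset _ _) ?_).symm
        intro p hp hnp
        simp only [Finset.mem_filter, Finset.mem_product, Finset.mem_range] at hp hnp
        have : n < p.1 + p.2 := by omega
        rw [Nat.choose_eq_zero_of_lt this]
        simp
    _ = ∑ q ∈ (range (n + 1)).sigma (fun m => range (m + 1)),
          ((Nat.choose n q.1 : ℚ)) * (Nat.choose (n + q.2 - 1) (n - 1)) * x ^ q.1 := by
        refine Finset.sum_nbij' (fun p => ⟨p.1 + p.2, p.1⟩) (fun q => (q.2, q.1 - q.2)) ?_ ?_ ?_ ?_ ?_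
        · intro p hp
          simp only [Finset.mem_filter, Finset.mem_product, Finset.mem_range] at hp ⊢
          simp only [Finset.mem_sigma, Finset.mem_range]
          omega
        · intro q hq
          simp only [Finset.mem_sigma, Finset.mem_range] at hq
          simp only [Finset.mem_filter, Finset.mem_product, Finset.mem_range]
          omega
        · intro p hp
          simp only [Finset.mem_filter, Finset.mem_product, Finset.mem_range] at hp
          simp
        · intro q hq
          simp only [Finset.mem_sigma, Finset.mem_range] at hq
          simp only
          congr 1 <;> omega
        · intro p hp
          simp only [pow_add]
          ring
    _ = ∑ k ∈ range (n + 1), ((Nat.choose n k : ℚ)) * (Nat.choose (n + k) k) * x ^ k := by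
        rw [Finset.sum_sigma]
        refine Finset.sum_congr rfl fun m hm => ?_
        dsimp only
        rw [← Finset.sum_mul, ← Finset.mul_sum, key m]
end

section
/- Define F_{A_n}(x,y) = Σ_{k,ℓ ≥ 0, k+ℓ ≤ n} [(ℓ+1)/(k+ℓ+1)] * C(n, k+ℓ) * C(n+k, n) * x^k y^ℓ as a polynomial in ℚ[x,y]. Then F_{A_n}(x,y) = (-1)^n * F_{A_n}(-1-x, -1-y). -/
/-!
Put `G(x, y) = F(x, y - 1)`. Its coefficients `c k i` are explicit: `c 0 i = [i = n]` and, for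
`k ≥ 1`, `c k i = (i + 1)/(n + 1) · C(n + k, k) · C(n - 1 - i, k - 1)`; that expanding `(1 + y)^i`
recovers `F` is the upper Vandermonde identity. The same numbers, with signs `(-1)^(n + k + i)`,
are the coefficients of `F(x - 1, y)`: after `C(n + m, m) C(m, k) = C(n + k, k) C(n + m, n + k)`
this is an iterated forward difference of `m ↦ C(m, n + k)`. Hence
`F(x, y) = G(x, 1 + y) = (-1)^n G(-1 - x, -y)`, and evaluating the first identity at
`(-1 - x, -1 - y)` gives the symmetry.
-/

open Finset

theorem Nat.sum_antidiagonal_choose_mul_choose (a b N : ℕ) :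
    ∑ p ∈ antidiagonal N, p.1.choose a * p.2.choose b = (N + 1).choose (a + b + 1) := by
  induction N generalizing b with
  | zero => rcases a with _ | a <;> rcases b with _ | b <;> simp [Nat.choose_eq_zero_of_lt]
  | succ N ih =>
    rw [Nat.sum_antidiagonal_succ']
    rcases b with _ | b
    · have h := ih 0
      simp only [Nat.choose_zero_right, mul_one, add_zero] at h ⊢
      rw [h, Nat.choose_succ_succ' (N + 1) a]
    · have pascal (p : ℕ × ℕ) : p.1.choose a * (p.2 + 1).choose (b + 1) =
          p.1.choose a * p.2.choose b + p.1.choose a * p.2.choose (b + 1) := by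
        rw [Nat.choose_succ_succ', mul_add]
      simp only [pascal, sum_add_distrib, ih, Nat.choose_zero_succ, mul_zero, zero_add]
      rw [← Nat.add_assoc a b 1, Nat.choose_succ_succ' (N + 1) (a + b + 1)]

theorem Int.alternating_sum_range_choose_mul_add_choose (N a j : ℕ) :
    ∑ p ∈ Finset.range (N + 1), (-1 : ℤ) ^ (N - p) * N.choose p * (a + p).choose (N + j) =
      a.choose j := by
  have h := fwdDiff_iter_eq_sum_shift 1 (fun x : ℕ ↦ (x.choose (N + j) : ℤ)) N a
  rw [fwdDiff_iter_choose] at h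
  simpa [smul_eq_mul] using h.symm

theorem Nat.add_choose_mul_choose (n m k : ℕ) :
    (n + m).choose m * m.choose k = (n + k).choose k * (n + m).choose (n + k) := by
  rcases le_or_gt k m with hkm | hmk
  · rw [Nat.choose_mul hkm, mul_comm ((n + k).choose k), Nat.choose_mul (Nat.le_add_left k n),
      Nat.add_sub_cancel, Nat.choose_symm_of_eq_add (by omega : n + m - k = m - k + n)]
  · rw [Nat.choose_eq_zero_of_lt hmk, Nat.choose_eq_zero_of_lt (by omega : n + m < n + k),
      mul_zero, mul_zero]

theorem Nat.cast_choose_eq_div_mul_choose_succ {K : Type*} [Field K] [CharZero K] (n l : ℕ) :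
    (n.choose l : K) = (l + 1) / (n + 1) * (n + 1).choose (l + 1) := by
  have h : ((n : K) + 1) * n.choose l = (n + 1).choose (l + 1) * (l + 1) := by
    exact_mod_cast Nat.add_one_mul_choose_eq n l
  field_simp
  linear_combination h

theorem one_add_pow_eq_sum_range {R : Type*} [CommSemiring R] {i N : ℕ} (hi : i ≤ N) (y : R) :
    (1 + y) ^ i = ∑ l ∈ range (N + 1), (i.choose l : R) * y ^ l := by
  rw [add_comm, add_pow]
  refine (sum_congr rfl fun l _ ↦ by ring).trans
    (sum_subset (range_subset_range.mpr (by omega)) fun l _ hl ↦ ?_)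
  rw [Nat.choose_eq_zero_of_lt (by simpa using hl), Nat.cast_zero, zero_mul]

theorem sum_mul_one_add_pow {R : Type*} [CommSemiring R] (N : ℕ) (a : ℕ → R) (y : R) :
    ∑ i ∈ range (N + 1), a i * (1 + y) ^ i =
      ∑ l ∈ range (N + 1), (∑ i ∈ range (N + 1), a i * i.choose l) * y ^ l := by
  calc _ = ∑ i ∈ range (N + 1), ∑ l ∈ range (N + 1), a i * i.choose l * y ^ l :=
        sum_congr rfl fun i hi ↦ by
          rw [one_add_pow_eq_sum_range (mem_range_succ_iff.mp hi), mul_sum]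
          simp only [mul_assoc]
    _ = _ := by
      rw [sum_comm]
      simp only [sum_mul]

def fTriangleCoeff (n k l : ℕ) : ℚ :=
  (l + 1) / (n + 1) * (n + 1).choose (k + l + 1) * (n + k).choose k

def fTriangle (n : ℕ) (x y : ℚ) : ℚ :=
  ∑ k ∈ range (n + 1), ∑ l ∈ range (n + 1), fTriangleCoeff n k l * x ^ k * y ^ l

-- Without the guard `i < n`, truncated subtraction would make `fTriangleShiftCoeff n 1 n ≠ 0`.
def fTriangleShiftCoeff (n : ℕ) : ℕ → ℕ → ℚ
  | 0, i => if i = n then 1 else 0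
  | k + 1, i =>
    if i < n then (i + 1) / (n + 1) * (n + (k + 1)).choose (k + 1) * (n - (i + 1)).choose k
    else 0

def fTriangleShift (n : ℕ) (x y : ℚ) : ℚ :=
  ∑ k ∈ range (n + 1), ∑ i ∈ range (n + 1), fTriangleShiftCoeff n k i * x ^ k * y ^ i

theorem sum_fTriangleShiftCoeff_mul_choose (n k l : ℕ) :
    ∑ i ∈ range (n + 1), fTriangleShiftCoeff n k i * i.choose l = fTriangleCoeff n k l := by
  rcases k with _ | k
  · simp [fTriangleShiftCoeff, fTriangleCoeff, Nat.cast_choose_eq_div_mul_choose_succ n l]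
  have vandermonde : ∑ i ∈ range n, (i + 1).choose (l + 1) * (n - (i + 1)).choose k =
      (n + 1).choose (k + 1 + l + 1) := by
    have h := Nat.sum_antidiagonal_choose_mul_choose (l + 1) k n
    rw [Nat.sum_antidiagonal_eq_sum_range_succ_mk, sum_range_succ'] at h
    rw [show k + 1 + l + 1 = l + 1 + k + 1 by omega]
    simpa using h
  have term (i : ℕ) (hi : i < n) : fTriangleShiftCoeff n (k + 1) i * i.choose l =
      (l + 1) / (n + 1) * (n + (k + 1)).choose (k + 1) *
        ((i + 1).choose (l + 1) * (n - (i + 1)).choose k : ℕ) := by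
    rw [fTriangleShiftCoeff, if_pos hi, Nat.cast_choose_eq_div_mul_choose_succ i l]
    push_cast
    field_simp
  rw [sum_range_succ, fTriangleShiftCoeff, if_neg (lt_irrefl n), zero_mul, add_zero,
    sum_congr rfl fun i hi ↦ term i (mem_range.mp hi), ← mul_sum, ← Nat.cast_sum, vandermonde,
    fTriangleCoeff]
  ring

theorem sum_neg_one_pow_mul_fTriangleShiftCoeff_mul_choose (n k l : ℕ) (hl : l ≤ n) :
    ∑ m ∈ range (n + 1), (-1) ^ (n + m + l) * fTriangleShiftCoeff n m l * m.choose k =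
      fTriangleCoeff n k l := by
  rw [sum_range_succ']
  rcases hl.eq_or_lt with rfl | hl
  · rw [sum_eq_zero fun p _ ↦ by simp [fTriangleShiftCoeff]]
    rcases k with _ | k
    · simp [fTriangleShiftCoeff, fTriangleCoeff, Even.neg_one_pow ⟨l, rfl⟩,
        div_self (Nat.cast_add_one_ne_zero (R := ℚ) l)]
    · simp [fTriangleShiftCoeff, fTriangleCoeff, Nat.choose_eq_zero_of_lt]
  set N := n - (l + 1) with hN
  have finiteDiff : ∑ p ∈ range (N + 1),
      ((-1) ^ (N - p) * N.choose p * (n + 1 + p).choose (n + k) : ℚ) =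
        (n + 1).choose (k + l + 1) := by
    have h := Int.alternating_sum_range_choose_mul_add_choose N (n + 1) (k + l + 1)
    rw [show N + (k + l + 1) = n + k by omega] at h
    exact_mod_cast h
  have term (p : ℕ) (hp : p ≤ N) :
      (-1) ^ (n + (p + 1) + l) * fTriangleShiftCoeff n (p + 1) l * (p + 1).choose k =
        (l + 1) / (n + 1) * (n + k).choose k *
          ((-1) ^ (N - p) * N.choose p * (n + 1 + p).choose (n + k) : ℚ) := by
    have h : ((n + (p + 1)).choose (p + 1) * (p + 1).choose k : ℚ) =
        (n + k).choose k * (n + 1 + p).choose (n + k) := by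
      rw [show n + 1 + p = n + (p + 1) by omega]
      exact_mod_cast Nat.add_choose_mul_choose n (p + 1) k
    rw [fTriangleShiftCoeff, if_pos hl, show n + (p + 1) + l = N - p + 2 * (p + l + 1) by omega,
      pow_add, pow_mul, neg_one_sq, one_pow, mul_one, ← hN]
    linear_combination ((-1) ^ (N - p) * (l + 1) / (n + 1) * N.choose p : ℚ) * h
  have vanishing (p : ℕ) (hp : N < p) : fTriangleShiftCoeff n (p + 1) l = 0 := by
    rw [fTriangleShiftCoeff, if_pos hl, ← hN, Nat.choose_eq_zero_of_lt hp, Nat.cast_zero, mul_zero]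
  rw [← sum_subset (range_subset_range.mpr (by omega : N + 1 ≤ n)) fun p _ hp ↦ by
      rw [vanishing p (by simpa using hp), mul_zero, zero_mul],
    sum_congr rfl fun p hp ↦ term p (mem_range_succ_iff.mp hp), ← mul_sum, finiteDiff,
    fTriangleShiftCoeff, if_neg hl.ne, fTriangleCoeff]
  ring

theorem fTriangle_eq_fTriangleShift_one_add (n : ℕ) (x y : ℚ) :
    fTriangle n x y = fTriangleShift n x (1 + y) := by
  refine sum_congr rfl fun k _ ↦ ?_
  rw [sum_mul_one_add_pow]
  refine sum_congr rfl fun l _ ↦ ?_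
  simp only [mul_right_comm _ (x ^ k), ← sum_mul, sum_fTriangleShiftCoeff_mul_choose]

theorem fTriangle_eq_neg_one_pow_mul_fTriangleShift (n : ℕ) (x y : ℚ) :
    fTriangle n x y = (-1) ^ n * fTriangleShift n (-(1 + x)) (-y) := by
  have signs (m i : ℕ) : (-1) ^ n * (fTriangleShiftCoeff n m i * (-(1 + x)) ^ m * (-y) ^ i) =
      (-1) ^ (n + m + i) * fTriangleShiftCoeff n m i * y ^ i * (1 + x) ^ m := by
    rw [neg_pow (1 + x), neg_pow y, pow_add, pow_add]
    ring
  simp only [fTriangleShift, mul_sum, signs]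
  rw [sum_comm]
  simp only [sum_mul_one_add_pow]
  rw [fTriangle, sum_comm]
  refine sum_congr rfl fun i hi ↦ sum_congr rfl fun k _ ↦ ?_
  simp only [mul_right_comm _ (y ^ i), ← sum_mul,
    sum_neg_one_pow_mul_fTriangleShiftCoeff_mul_choose n k i (mem_range_succ_iff.mp hi)]

theorem fTriangle_neg_one_sub (n : ℕ) (x y : ℚ) :
    fTriangle n x y = (-1) ^ n * fTriangle n (-1 - x) (-1 - y) := by
  rw [fTriangle_eq_fTriangleShift_one_add n (-1 - x), fTriangle_eq_neg_one_pow_mul_fTriangleShift]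
  congr 2 <;> ring

theorem sum_triangle_eq_fTriangle (n : ℕ) (x y : ℚ) :
    ∑ k ∈ range (n + 1), ∑ ℓ ∈ range (n + 1 - k),
        ((ℓ + 1 : ℚ) / (k + ℓ + 1)) * (Nat.choose n (k + ℓ)) *
          (Nat.choose (n + k) n) * x ^ k * y ^ ℓ = fTriangle n x y := by
  refine sum_congr rfl fun k hk ↦ ?_
  have coeff (l : ℕ) : ((l + 1 : ℚ) / (k + l + 1)) * (Nat.choose n (k + l)) *
      (Nat.choose (n + k) n) = fTriangleCoeff n k l := by
    rw [fTriangleCoeff, Nat.cast_choose_eq_div_mul_choose_succ n (k + l), Nat.choose_symm_add]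
    push_cast
    field_simp
  simp only [coeff]
  refine sum_subset (range_subset_range.mpr (by omega)) fun l _ hl ↦ ?_
  rw [fTriangleCoeff, Nat.choose_eq_zero_of_lt (by simp only [mem_range, not_lt] at hl; omega)]
  simp

/-- Refined Dehn–Sommerville symmetry `F(x,y) = (-1)^n F(-1-x,-1-y)` for the
explicit type `A_n` F-triangle. -/
theorem F_triangle_A_symmetry (n : ℕ) (x y : ℚ) :
    ∑ k ∈ range (n + 1), ∑ ℓ ∈ range (n + 1 - k),
        ((ℓ + 1 : ℚ) / (k + ℓ + 1)) * (Nat.choose n (k + ℓ)) *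
          (Nat.choose (n + k) n) * x ^ k * y ^ ℓ =
      (-1) ^ n *
        ∑ k ∈ range (n + 1), ∑ ℓ ∈ range (n + 1 - k),
          ((ℓ + 1 : ℚ) / (k + ℓ + 1)) * (Nat.choose n (k + ℓ)) *
            (Nat.choose (n + k) n) * (-1 - x) ^ k * (-1 - y) ^ ℓ := by
  rw [sum_triangle_eq_fTriangle, sum_triangle_eq_fTriangle]
  exact fTriangle_neg_one_sub n x y
end

section
/- Define F_{B_n}(x,y) = Σ_{k,ℓ ≥ 0, k+ℓ ≤ n} C(n, k+ℓ) * C(n+k-1, n-1) * x^k y^ℓ as a polynomial in ℚ[x,y], for n ≥ 1. Then F_{B_n}(x,y) = (-1)^n * F_{B_n}(-1-x, -1-y). -/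
/-!
`F_{B_n}(x, y)` is the residue at infinity of `t ^ n (1 + t) ^ n / ((t - x) ^ n (t - y))`: expanding
`1 / ((t - x) ^ n (t - y))` in powers of `1 / t` gives the coefficients
`C(n + k - 1, n - 1) x ^ k y ^ ℓ`, which pair with the coefficients `C(n, k + ℓ)` of
`t ^ n (1 + t) ^ n`. Algebraically, this residue is the coefficient of
`t ^ n` in the remainder of `t ^ n (1 + t) ^ n` modulo the monic `(t - x) ^ n (t - y)`. The
substitution `t ↦ -1 - t` fixes the numerator, turns the denominator into `± (t - x') ^ n (t - y')`
with `x' = -1 - x`, `y' = -1 - y`, and multiplies the top coefficient of the remainder by `(-1) ^ n`.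
-/

open Finset Polynomial

section

variable {R : Type*} [CommRing R]

/-- With `c = 1 / D` expanded in `s = 1 / t`, the right-hand side is the residue of `P / D` at
infinity. -/
theorem coeff_modByMonic_eq_coeff_mul_reflect {D : R[X]} {k : ℕ} (hD : D.Monic)
    (hdeg : D.natDegree = k + 1) {c : PowerSeries R}
    (hc : c * (D.reflect (k + 1) : PowerSeries R) = 1) {P : R[X]} {e : ℕ}
    (hP : P.natDegree ≤ k + 1 + e) :
    (P %ₘ D).coeff k =
      PowerSeries.coeff (e + 1) (c * (P.reflect (k + 1 + e) : PowerSeries R)) := by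
  have hR : (P %ₘ D).natDegree ≤ k := by
    have := natDegree_modByMonic_lt P hD (fun h => by simp [h] at hdeg)
    omega
  have hQ : (P /ₘ D).natDegree ≤ e := by rw [natDegree_divByMonic P hD, hdeg]; omega
  have hc0 : PowerSeries.constantCoeff c = 1 := by
    have := congrArg PowerSeries.constantCoeff hc
    rwa [map_mul,
      ← PowerSeries.coeff_zero_eq_constantCoeff_apply (D.reflect (k + 1) : PowerSeries R),
      coeff_coe, coeff_reflect, revAt_zero, ← hdeg, hD.coeff_natDegree, mul_one, map_one] at this
  have hsplit : P.reflect (k + 1 + e) =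
      (P %ₘ D).reflect k * X ^ (e + 1) + D.reflect (k + 1) * (P /ₘ D).reflect e := by
    conv_lhs => rw [← modByMonic_add_div P D]
    rw [reflect_add, ← reflect_mul _ _ hdeg.le hQ, ← reflect_one,
      ← reflect_mul _ _ hR (natDegree_one.trans_le (Nat.zero_le _)), mul_one, Nat.add_right_comm,
      add_assoc]
  have hQe : ((P /ₘ D).reflect e).coeff (e + 1) = 0 := by
    rw [coeff_reflect, revAt_eq_self_of_lt (Nat.lt_succ_self e)]
    exact coeff_eq_zero_of_natDegree_lt (by omega)
  rw [hsplit, Polynomial.coe_add, Polynomial.coe_mul, Polynomial.coe_mul, mul_add,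
    ← mul_assoc c (D.reflect (k + 1) : PowerSeries R), hc, one_mul, map_add, coeff_coe, hQe,
    add_zero, Polynomial.coe_pow, coe_X, ← mul_assoc, PowerSeries.coeff_mul_X_pow',
    if_pos le_rfl, Nat.sub_self, PowerSeries.coeff_zero_eq_constantCoeff_apply, map_mul, hc0,
    one_mul, ← PowerSeries.coeff_zero_eq_constantCoeff_apply, coeff_coe, coeff_reflect,
    revAt_zero]

theorem reflect_X_add_one_pow (n : ℕ) : ((X + 1 : R[X]) ^ n).reflect n = (X + 1) ^ n := by
  ext i
  rw [coeff_reflect, coeff_X_add_one_pow, coeff_X_add_one_pow]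
  rcases le_or_gt i n with h | h
  · rw [revAt_le h, Nat.choose_symm h]
  · rw [revAt_eq_self_of_lt h]

theorem reflect_one_X_sub_C (x : R) : (X - C x).reflect 1 = 1 - C x * X := by
  rw [reflect_sub, reflect_one_X, reflect_C, pow_one]

theorem reflect_X_sub_C_pow (x : R) (n : ℕ) :
    ((X - C x) ^ n).reflect n = (1 - C x * X) ^ n := by
  induction n with
  | zero => simp
  | succ n ih =>
    rw [pow_succ, reflect_mul _ _ ((natDegree_pow_le_of_le n (natDegree_X_sub_C_le x)).trans_eq
      (mul_one n)) (natDegree_X_sub_C_le x), ih, reflect_one_X_sub_C, pow_succ]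

theorem coe_one_sub_C_mul_X (x : R) :
    ((1 - C x * X : R[X]) : PowerSeries R) = PowerSeries.rescale x (1 - PowerSeries.X) := by
  rw [map_sub, map_one, PowerSeries.rescale_X, Polynomial.coe_sub, Polynomial.coe_one,
    Polynomial.coe_mul, coe_C, coe_X]

theorem rescale_invOneSubPow_mul_one_sub_C_mul_X_pow (x : R) (n : ℕ) :
    PowerSeries.rescale x (PowerSeries.invOneSubPow R n : PowerSeries R) *
      (((1 - C x * X) ^ n : R[X]) : PowerSeries R) = 1 := by
  rw [Polynomial.coe_pow, coe_one_sub_C_mul_X, ← map_pow, ← map_mul,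
    ← PowerSeries.invOneSubPow_inv_eq_one_sub_pow, Units.inv_eq_val_inv, Units.mul_inv, map_one]

def fTriangleB (n : ℕ) (x y : R) : R :=
  ∑ k ∈ range (n + 1), ∑ ℓ ∈ range (n + 1 - k),
    (n.choose (k + ℓ) : R) * ((n + k - 1).choose (n - 1) : R) * x ^ k * y ^ ℓ

theorem fTriangleB_eq_coeff {n : ℕ} (hn : 1 ≤ n) (x y : R) :
    fTriangleB n x y = PowerSeries.coeff n
      (PowerSeries.rescale x (PowerSeries.invOneSubPow R n : PowerSeries R) *
        (PowerSeries.rescale y (PowerSeries.invOneSubPow R 1 : PowerSeries R) *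
          (((X + 1) ^ n : R[X]) : PowerSeries R))) := by
  rw [PowerSeries.coeff_mul, Finset.Nat.sum_antidiagonal_eq_sum_range_succ
    (fun i j => PowerSeries.coeff i _ * PowerSeries.coeff j _)]
  refine sum_congr rfl fun k hk => ?_
  have hk : k ≤ n := Nat.lt_succ_iff.mp (mem_range.mp hk)
  rw [PowerSeries.coeff_mul, Finset.Nat.sum_antidiagonal_eq_sum_range_succ
    (fun i j => PowerSeries.coeff i _ * PowerSeries.coeff j _), mul_sum,
    show (n - k).succ = n + 1 - k by omega]
  refine sum_congr rfl fun ℓ hℓ => ?_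
  have hℓ : k + ℓ ≤ n := by have := mem_range.mp hℓ; omega
  rw [PowerSeries.coeff_rescale, PowerSeries.coeff_rescale,
    PowerSeries.invOneSubPow_val_eq_mk_sub_one_add_choose_of_pos _ _ hn,
    PowerSeries.invOneSubPow_val_eq_mk_sub_one_add_choose_of_pos _ _ zero_lt_one,
    PowerSeries.coeff_mk, PowerSeries.coeff_mk, coeff_coe, coeff_X_add_one_pow,
    Nat.sub_sub, Nat.choose_symm hℓ, show n - 1 + k = n + k - 1 by omega]
  simp only [Nat.sub_self, Nat.choose_zero_right, Nat.cast_one, mul_one]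
  ring

theorem monic_X_sub_C_pow_mul (n : ℕ) (x y : R) : ((X - C x) ^ n * (X - C y)).Monic :=
  ((monic_X_sub_C x).pow n).mul (monic_X_sub_C y)

variable [Nontrivial R]

theorem natDegree_C_sub_X (a : R) : (C a - X).natDegree = 1 := by
  rw [← neg_sub, natDegree_neg, natDegree_X_sub_C]

theorem coeff_comp_C_sub_X_of_natDegree_le {r : R[X]} {k : ℕ} (hr : r.natDegree ≤ k) (a : R) :
    (r.comp (C a - X)).coeff k = (-1) ^ k * r.coeff k := by
  have hcomp := natDegree_comp_le (p := r) (q := C a - X)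
  rw [natDegree_C_sub_X, mul_one] at hcomp
  rcases hr.lt_or_eq with hlt | rfl
  · rw [coeff_eq_zero_of_natDegree_lt (hcomp.trans_lt hlt), coeff_eq_zero_of_natDegree_lt hlt,
      mul_zero]
  · have := coeff_comp_degree_mul_degree (p := r) (q := C a - X) (by simp [natDegree_C_sub_X])
    rw [natDegree_C_sub_X, mul_one] at this
    rw [this, ← neg_sub, leadingCoeff_neg, leadingCoeff_X_sub_C, coeff_natDegree, mul_comm]

theorem modByMonic_comp_C_sub_X {D D' : R[X]} (hD : D.Monic) (hD' : D'.Monic)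
    (hdeg : D'.natDegree = D.natDegree) {a u : R} (hu : D.comp (C a - X) = C u * D')
    (P : R[X]) : P.comp (C a - X) %ₘ D' = (P %ₘ D).comp (C a - X) := by
  refine (div_modByMonic_unique (C u * (P /ₘ D).comp (C a - X)) _ hD' ⟨?_, ?_⟩).2
  · conv_rhs => rw [← modByMonic_add_div P D]
    rw [add_comp, mul_comp, hu]
    ring
  · by_cases hr : P %ₘ D = 0
    · rw [hr, zero_comp, degree_zero, bot_lt_iff_ne_bot, Ne, degree_eq_bot]
      exact hD'.ne_zero
    refine degree_lt_degree (natDegree_comp_le.trans_lt ?_)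
    rw [natDegree_C_sub_X, mul_one, hdeg]
    exact natDegree_lt_natDegree hr (degree_modByMonic_lt P hD)

theorem natDegree_X_sub_C_pow_mul (n : ℕ) (x y : R) :
    ((X - C x) ^ n * (X - C y)).natDegree = n + 1 := by
  rw [((monic_X_sub_C x).pow n).natDegree_mul (monic_X_sub_C y),
    (monic_X_sub_C x).natDegree_pow, natDegree_X_sub_C, natDegree_X_sub_C, mul_one]

theorem fTriangleB_eq_coeff_modByMonic {n : ℕ} (hn : 1 ≤ n) (x y : R) :
    fTriangleB n x y = ((X * (X + 1)) ^ n %ₘ ((X - C x) ^ n * (X - C y))).coeff n := by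
  have hX : (X * (X + 1) : R[X]).natDegree ≤ 2 := by compute_degree
  have hX1 : ((X + 1 : R[X]) ^ n).natDegree ≤ n :=
    (natDegree_pow_le_of_le n (by compute_degree)).trans_eq (mul_one n)
  have hP : ((X * (X + 1) : R[X]) ^ n).natDegree ≤ n + 1 + (n - 1) :=
    (natDegree_pow_le_of_le n hX).trans_eq (by omega)
  have hreflect : ((X * (X + 1) : R[X]) ^ n).reflect (n + 1 + (n - 1)) = (X + 1) ^ n := by
    rw [show n + 1 + (n - 1) = n + n by omega, mul_pow,
      reflect_mul _ _ (natDegree_X_pow_le n) hX1,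
      reflect_monomial, revAt_le le_rfl, Nat.sub_self, pow_zero, one_mul, reflect_X_add_one_pow]
  have hc : PowerSeries.rescale x (PowerSeries.invOneSubPow R n : PowerSeries R) *
      PowerSeries.rescale y (PowerSeries.invOneSubPow R 1 : PowerSeries R) *
      (((X - C x) ^ n * (X - C y)).reflect (n + 1) : PowerSeries R) = 1 := by
    rw [reflect_mul _ _ ((natDegree_pow_le_of_le n (natDegree_X_sub_C_le x)).trans_eq (mul_one n))
      (natDegree_X_sub_C_le y), reflect_X_sub_C_pow, reflect_one_X_sub_C, Polynomial.coe_mul,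
      mul_mul_mul_comm, rescale_invOneSubPow_mul_one_sub_C_mul_X_pow, one_mul]
    simpa only [pow_one] using rescale_invOneSubPow_mul_one_sub_C_mul_X_pow y 1
  rw [coeff_modByMonic_eq_coeff_mul_reflect (monic_X_sub_C_pow_mul n x y)
    (natDegree_X_sub_C_pow_mul n x y) hc hP, hreflect, Nat.sub_add_cancel hn,
    fTriangleB_eq_coeff hn, mul_assoc]

theorem fTriangleB_eq_neg_one_pow_mul {n : ℕ} (hn : 1 ≤ n) (x y : R) :
    fTriangleB n x y = (-1) ^ n * fTriangleB n (-1 - x) (-1 - y) := by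
  have hN : ((X * (X + 1) : R[X]) ^ n).comp (C (-1) - X) = (X * (X + 1)) ^ n := by
    rw [pow_comp, mul_comp, add_comp, X_comp, one_comp, map_neg, map_one]
    ring
  have hD : ((X - C x) ^ n * (X - C y)).comp (C (-1) - X) =
      C ((-1) ^ (n + 1)) * ((X - C (-1 - x)) ^ n * (X - C (-1 - y))) := by
    have hlin (z : R) : (X - C z).comp (C (-1) - X) = -(X - C (-1 - z)) := by
      rw [sub_comp, X_comp, C_comp, map_sub, map_neg, map_one]
      ring
    rw [mul_comp, pow_comp, hlin, hlin, neg_pow, map_pow, map_neg, map_one]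
    ring
  have hR : ((X * (X + 1) : R[X]) ^ n %ₘ ((X - C x) ^ n * (X - C y))).natDegree ≤ n := by
    have := natDegree_modByMonic_lt ((X * (X + 1) : R[X]) ^ n) (monic_X_sub_C_pow_mul n x y)
      fun h => by simpa [h] using natDegree_X_sub_C_pow_mul n x y
    rw [natDegree_X_sub_C_pow_mul] at this
    omega
  rw [fTriangleB_eq_coeff_modByMonic hn (-1 - x), ← hN,
    modByMonic_comp_C_sub_X (monic_X_sub_C_pow_mul n x y) (monic_X_sub_C_pow_mul n _ _)
      (by rw [natDegree_X_sub_C_pow_mul, natDegree_X_sub_C_pow_mul]) hD,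
    coeff_comp_C_sub_X_of_natDegree_le hR, ← mul_assoc, ← mul_pow, neg_one_mul, neg_neg, one_pow,
    one_mul, fTriangleB_eq_coeff_modByMonic hn]

end

/-- Refined Dehn–Sommerville symmetry `F(x,y) = (-1)^n F(-1-x,-1-y)` for the
explicit type `B_n` F-triangle. -/
theorem F_triangle_B_symmetry (n : ℕ) (hn : 1 ≤ n) (x y : ℚ) :
    ∑ k ∈ range (n + 1), ∑ ℓ ∈ range (n + 1 - k),
        ((Nat.choose n (k + ℓ) : ℚ)) * (Nat.choose (n + k - 1) (n - 1)) * x ^ k * y ^ ℓ =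
      (-1) ^ n *
        ∑ k ∈ range (n + 1), ∑ ℓ ∈ range (n + 1 - k),
          ((Nat.choose n (k + ℓ) : ℚ)) * (Nat.choose (n + k - 1) (n - 1)) *
            (-1 - x) ^ k * (-1 - y) ^ ℓ :=
  fTriangleB_eq_neg_one_pow_mul hn x y
end

section
/- Define F_{A_n}(x,y) = Σ_{k,ℓ ≥ 0, k+ℓ ≤ n} [(ℓ+1)/(k+ℓ+1)] * C(n, k+ℓ) * C(n+k, n) * x^k y^ℓ. Then F_{A_n}(0, y) = (1+y)^n and F_{A_n}(-1, y) = y^n. -/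
open Finset

/-- Swap a triangular double sum. -/
lemma tri_swap (m : ℕ) (f : ℕ → ℕ → ℚ) :
    ∑ k ∈ range m, ∑ l ∈ range (m - k), f k l
      = ∑ l ∈ range m, ∑ k ∈ range (m - l), f k l := by
  have h : ∀ (g : ℕ → ℕ → ℚ), ∑ k ∈ range m, ∑ l ∈ range (m - k), g k l
      = ∑ k ∈ range m, ∑ l ∈ range m, if k + l < m then g k l else 0 := by
    intro g
    refine Finset.sum_congr rfl fun k hk => ?_
    rw [← Finset.sum_filter]
    congr 1
    ext l
    simp only [Finset.mem_filter, Finset.mem_range] at *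
    omega
  rw [h, h, Finset.sum_comm]
  exact Finset.sum_congr rfl fun l _ => Finset.sum_congr rfl fun k _ => by
    rw [Nat.add_comm]

lemma term_telescope (n ℓ k : ℕ) (hl : ℓ < n) (hk : k + ℓ ≤ n) :
    ((ℓ + 1 : ℚ) / (k + ℓ + 1)) * (Nat.choose n (k + ℓ)) *
        (Nat.choose (n + k) n) * (-1 : ℚ) ^ k
      = ((-1 : ℚ) ^ k * ((ℓ + 1) * k) / ((n + 1) * ((n : ℚ) - ℓ)) *
            (Nat.choose n (k + ℓ)) * (Nat.choose (n + k) n))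
        - ((-1 : ℚ) ^ (k + 1) * ((ℓ + 1) * (k + 1)) / ((n + 1) * ((n : ℚ) - ℓ)) *
            (Nat.choose n ((k + 1) + ℓ)) * (Nat.choose (n + (k + 1)) n)) := by
  have hkl1 : (k + 1) + ℓ = k + ℓ + 1 := by omega
  have hnk1 : n + (k + 1) = n + k + 1 := by omega
  rw [hkl1, hnk1]
  have hA : ((Nat.choose n (k + ℓ + 1) : ℚ)) * ((k : ℚ) + ℓ + 1)
      = (Nat.choose n (k + ℓ)) * ((n : ℚ) - (k : ℚ) - ℓ) := by
    have hc : ((Nat.choose n (k + ℓ + 1) : ℚ)) * (((k + ℓ + 1 : ℕ)) : ℚ)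
        = (Nat.choose n (k + ℓ)) * (((n - (k + ℓ) : ℕ)) : ℚ) := by
      exact_mod_cast congrArg (Nat.cast : ℕ → ℚ) (Nat.choose_succ_right_eq n (k + ℓ))
    rw [Nat.cast_sub hk] at hc
    push_cast at hc
    linarith
  have hB : ((Nat.choose (n + k + 1) n : ℚ)) * ((k : ℚ) + 1)
      = (Nat.choose (n + k) n) * ((n : ℚ) + k + 1) := by
    have h2 : Nat.choose (n + k) k = Nat.choose (n + k) n := by
      rw [Nat.add_comm n k]; exact Nat.choose_symm_add
    have h3 : Nat.choose (n + k + 1) (k + 1) = Nat.choose (n + k + 1) n := by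
      have he : (k + 1) + n = n + k + 1 := by omega
      rw [← he]; exact Nat.choose_symm_add
    have h1 : (n + k + 1) * Nat.choose (n + k) n = Nat.choose (n + k + 1) n * (k + 1) := by
      rw [← h2, ← h3]; exact Nat.add_one_mul_choose_eq (n + k) k
    have := congrArg (Nat.cast : ℕ → ℚ) h1
    push_cast at this
    linarith
  have d1 : ((k : ℚ) + ℓ + 1) ≠ 0 := by positivity
  have d2 : ((k : ℚ) + 1) ≠ 0 := by positivity
  have d3 : ((n : ℚ) + 1) ≠ 0 := by positivity
  have d4 : ((n : ℚ) - ℓ) ≠ 0 := by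
    have : (ℓ : ℚ) < n := by exact_mod_cast hl
    intro h; linarith [sub_eq_zero.mp h]
  have hA' : ((Nat.choose n (k + ℓ + 1) : ℚ))
      = (Nat.choose n (k + ℓ)) * ((n : ℚ) - (k : ℚ) - ℓ) / ((k : ℚ) + ℓ + 1) := by
    field_simp
    linarith [hA]
  have hB' : ((Nat.choose (n + k + 1) n : ℚ))
      = (Nat.choose (n + k) n) * ((n : ℚ) + k + 1) / ((k : ℚ) + 1) := by
    field_simp
    linarith [hB]
  rw [hA', hB', pow_succ]
  field_simp
  ring

lemma innerSumF (n ℓ : ℕ) (hℓ : ℓ ≤ n) :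
    ∑ k ∈ range (n + 1 - ℓ),
        ((ℓ + 1 : ℚ) / (k + ℓ + 1)) * (Nat.choose n (k + ℓ)) *
          (Nat.choose (n + k) n) * (-1 : ℚ) ^ k
      = if ℓ = n then 1 else 0 := by
  rcases eq_or_lt_of_le hℓ with h | h
  · subst h
    simp only [if_pos rfl, Nat.add_sub_cancel_left]
    rw [Finset.sum_range_one]
    have d : ((ℓ : ℚ) + 1) ≠ 0 := by positivity
    simp [Nat.choose_self, div_self, d]
  · rw [if_neg (by omega)]
    set T : ℕ → ℚ := fun k =>
      (-1 : ℚ) ^ k * ((ℓ + 1) * k) / ((n + 1) * ((n : ℚ) - ℓ)) *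
        (Nat.choose n (k + ℓ)) * (Nat.choose (n + k) n) with hT
    have hstep : ∀ k ∈ range (n + 1 - ℓ),
        ((ℓ + 1 : ℚ) / (k + ℓ + 1)) * (Nat.choose n (k + ℓ)) *
          (Nat.choose (n + k) n) * (-1 : ℚ) ^ k = T k - T (k + 1) := by
      intro k hk
      rw [Finset.mem_range] at hk
      have h2 := term_telescope n ℓ k h (by omega)
      simp only [hT]
      push_cast
      push_cast at h2
      linarith
    rw [Finset.sum_congr rfl hstep, Finset.sum_range_sub']
    have hT0 : T 0 = 0 := by simp [hT]
    have hTend : T (n + 1 - ℓ) = 0 := by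
      have : (n + 1 - ℓ) + ℓ = n + 1 := by omega
      simp [hT, this, Nat.choose_succ_self]
    rw [hT0, hTend, sub_zero]

/-- Evaluations of the type `A_n` F-triangle: `F(0,y) = (1+y)^n` and `F(-1,y) = y^n`. -/
theorem F_triangle_A_evaluations (n : ℕ) (y : ℚ) :
    (∑ k ∈ range (n + 1), ∑ ℓ ∈ range (n + 1 - k),
        ((ℓ + 1 : ℚ) / (k + ℓ + 1)) * (Nat.choose n (k + ℓ)) *
          (Nat.choose (n + k) n) * (0 : ℚ) ^ k * y ^ ℓ = (1 + y) ^ n) ∧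
      (∑ k ∈ range (n + 1), ∑ ℓ ∈ range (n + 1 - k),
          ((ℓ + 1 : ℚ) / (k + ℓ + 1)) * (Nat.choose n (k + ℓ)) *
            (Nat.choose (n + k) n) * (-1 : ℚ) ^ k * y ^ ℓ = y ^ n) := by
  constructor
  · rw [Finset.sum_eq_single 0]
    · have d : ∀ ℓ : ℕ, ((ℓ : ℚ) + 1) ≠ 0 := fun ℓ => by positivity
      have : ∑ ℓ ∈ range (n + 1 - 0),
          ((ℓ + 1 : ℚ) / ((0 : ℕ) + ℓ + 1)) * (Nat.choose n ((0 : ℕ) + ℓ)) *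
            (Nat.choose (n + 0) n) * (0 : ℚ) ^ (0 : ℕ) * y ^ ℓ
          = ∑ ℓ ∈ range (n + 1), (Nat.choose n ℓ : ℚ) * y ^ ℓ := by
        refine Finset.sum_congr (by norm_num) fun ℓ _ => ?_
        simp [div_self (d ℓ)]
      rw [this]
      rw [add_comm (1 : ℚ) y, add_pow]
      exact Finset.sum_congr rfl fun ℓ _ => by ring
    · intro k _ hk
      have : (0 : ℚ) ^ k = 0 := zero_pow hk
      simp [this]
    · intro h; simp at h
  · rw [tri_swap (n + 1) (fun k ℓ => ((ℓ + 1 : ℚ) / (k + ℓ + 1)) * (Nat.choose n (k + ℓ)) *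
      (Nat.choose (n + k) n) * (-1 : ℚ) ^ k * y ^ ℓ)]
    have : ∀ ℓ ∈ range (n + 1),
        (∑ k ∈ range (n + 1 - ℓ), ((ℓ + 1 : ℚ) / (k + ℓ + 1)) * (Nat.choose n (k + ℓ)) *
          (Nat.choose (n + k) n) * (-1 : ℚ) ^ k * y ^ ℓ)
        = (if ℓ = n then 1 else 0) * y ^ ℓ := by
      intro ℓ hℓ
      rw [Finset.mem_range] at hℓ
      rw [← Finset.sum_mul, innerSumF n ℓ (by omega)]
    rw [Finset.sum_congr rfl this]
    simp only [ite_mul, one_mul, zero_mul]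
    rw [Finset.sum_ite_eq' (range (n + 1)) n (fun ℓ => y ^ ℓ)]
    simp
end

section
/- Let F = Σ_{k,ℓ,m ≥ 0} [(ℓ+1)/(k+ℓ+1)] * C(k+ℓ+m, k+ℓ) * C(2k+ℓ+m, k+ℓ+m) * x^k y^ℓ z^m be a formal power series in ℚ[[x,y,z]]. Then ∂F/∂y = F². -/
/-!
Write `C` for the Catalan series. The coefficient of `x^k` in `C^(ℓ+1)` is the ballot number
`(ℓ+1)/(k+ℓ+1) * C(2k+ℓ, k)`, so `F = Σ_ℓ a^(ℓ+1) y^ℓ = a / (1 - a y)` with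
`a = C(x / (1-z)^2) / (1-z)`, and `∂F/∂y = a^2 / (1 - a y)^2 = F^2`.
Coefficientwise: the `z`-convolution in `F * F` is `(1-z)^-(s+1) (1-z)^-(t+1) = (1-z)^-(s+t+2)`,
the `x`-convolution is `C^(i+1) C^(j+1) = C^(i+j+2)`, and what remains depends on the
`y`-exponents only through `ℓ = i + j`, so the `y`-convolution contributes the factor `ℓ + 1`.
-/

open Finset

/-- The coefficient of `x^k y^ℓ z^m` in the type `A` F-triangle generating series `F`. -/
noncomputable def Fcoeff (k ℓ m : ℕ) : ℚ :=
  ((ℓ + 1 : ℚ) / (k + ℓ + 1)) * (Nat.choose (k + ℓ + m) (k + ℓ)) *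
    (Nat.choose (2 * k + ℓ + m) (k + ℓ + m))

/-- `F` as a formal power series in `ℚ[[x,y,z]]` (variables indexed by `Fin 3`). -/
noncomputable def FseriesA : MvPowerSeries (Fin 3) ℚ :=
  fun d => Fcoeff (d 0) (d 1) (d 2)

open PowerSeries

theorem Nat.sum_antidiagonal_add_choose_mul_add_choose (a b m : ℕ) :
    ∑ p ∈ antidiagonal m, (a + p.1).choose a * (b + p.2).choose b =
      (a + b + 1 + m).choose (a + b + 1) := by
  have h := congrArg (coeff m) (congrArg₂ (· * ·) (mk_one_pow_eq_mk_choose_add ℤ a)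
    (mk_one_pow_eq_mk_choose_add ℤ b))
  rw [← pow_add, show a + 1 + (b + 1) = a + b + 1 + 1 by ring, mk_one_pow_eq_mk_choose_add,
    coeff_mul] at h
  simp only [coeff_mk] at h
  exact_mod_cast h.symm

theorem MvPowerSeries.coeff_mul_fin_three {R : Type*} [Semiring R] (φ ψ : MvPowerSeries (Fin 3) R)
    (d : Fin 3 →₀ ℕ) :
    coeff d (φ * ψ) =
      ∑ p ∈ antidiagonal (d 0), ∑ q ∈ antidiagonal (d 1), ∑ r ∈ antidiagonal (d 2),
        coeff (.single 0 p.1 + .single 1 q.1 + .single 2 r.1) φ *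
          coeff (.single 0 p.2 + .single 1 q.2 + .single 2 r.2) ψ := by
  have single_add_single_add_single (u : Fin 3 →₀ ℕ) :
      .single 0 (u 0) + .single 1 (u 1) + .single 2 (u 2) = u := by
    ext i; fin_cases i <;> simp
  rw [coeff_mul, ← sum_product', ← sum_product']
  refine sum_nbij' (fun uv => (((uv.1 0, uv.2 0), (uv.1 1, uv.2 1)), (uv.1 2, uv.2 2)))
    (fun x => (.single 0 x.1.1.1 + .single 1 x.1.2.1 + .single 2 x.2.1,
      .single 0 x.1.1.2 + .single 1 x.1.2.2 + .single 2 x.2.2)) ?_ ?_ ?_ ?_ ?_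
  · rintro ⟨u, v⟩ huv
    simp only [mem_product, HasAntidiagonal.mem_antidiagonal] at huv ⊢
    simp [← huv]
  · rintro ⟨⟨⟨a, a'⟩, ⟨b, b'⟩⟩, ⟨c, c'⟩⟩ hx
    simp only [mem_product, HasAntidiagonal.mem_antidiagonal] at hx ⊢
    ext i
    fin_cases i <;> simp [hx]
  · rintro ⟨u, v⟩ _
    simp only [single_add_single_add_single]
  · rintro ⟨⟨⟨a, a'⟩, ⟨b, b'⟩⟩, ⟨c, c'⟩⟩ _
    simp
  · rintro ⟨u, v⟩ _
    simp only [single_add_single_add_single]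

/-- The ballot number `(j + 1) / (k + j + 1) * C(2k + j, k)`, written as a difference of binomials
so that its recurrence `ballot_succ_succ` is Pascal's rule. -/
noncomputable def ballot (k j : ℕ) : ℚ :=
  (2 * k + j).choose k - (2 * k + j).choose (k + j + 1)

theorem ballot_eq_div_mul_choose (k j : ℕ) :
    ballot k j = (j + 1) / (k + j + 1) * (2 * k + j).choose k := by
  have hsymm := Nat.choose_symm_of_eq_add (show 2 * k + j = k + (k + j) by ring)
  have hsucc := Nat.choose_succ_right_eq (2 * k + j) (k + j)
  rw [← hsymm, show 2 * k + j - (k + j) = k by omega] at hsucc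
  have hsucc' : ((2 * k + j).choose (k + j + 1) : ℚ) * (k + j + 1) = (2 * k + j).choose k * k := by
    exact_mod_cast hsucc
  rw [ballot, div_mul_eq_mul_div, eq_div_iff (by positivity)]
  linear_combination -hsucc'

theorem ballot_zero_left (j : ℕ) : ballot 0 j = 1 := by
  simp [ballot]

theorem ballot_zero_right (k : ℕ) : ballot k 0 = catalan k := by
  have h : ((k + 1 : ℕ) : ℚ) * catalan k = (2 * k).choose k := by
    exact_mod_cast succ_mul_catalan_eq_centralBinom k
  rw [ballot_eq_div_mul_choose, add_zero, ← h]
  push_cast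
  field_simp
  ring

theorem ballot_succ_succ (k j : ℕ) :
    ballot (k + 1) (j + 1) = ballot (k + 1) j + ballot k (j + 2) := by
  have hn : 2 * (k + 1) + j = 2 * k + (j + 2) := by ring
  have h₁ : (2 * (k + 1) + (j + 1)).choose (k + 1) =
      (2 * k + (j + 2)).choose k + (2 * (k + 1) + j).choose (k + 1) := by
    rw [show 2 * (k + 1) + (j + 1) = 2 * k + (j + 2) + 1 by ring, Nat.choose_succ_succ', hn]
  have h₂ : (2 * (k + 1) + (j + 1)).choose (k + 1 + (j + 1) + 1) =
      (2 * (k + 1) + j).choose (k + 1 + j + 1) + (2 * k + (j + 2)).choose (k + (j + 2) + 1) := by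
    rw [show 2 * (k + 1) + (j + 1) = 2 * k + (j + 2) + 1 by ring,
      show k + 1 + (j + 1) + 1 = k + 1 + j + 1 + 1 by ring, Nat.choose_succ_succ', hn,
      show k + 1 + j + 1 + 1 = k + (j + 2) + 1 by ring]
  simp only [ballot]
  rw [h₁, h₂]
  push_cast
  ring

theorem catalanSeries_pow_add_two (j : ℕ) :
    catalanSeries ^ (j + 2) = catalanSeries ^ (j + 1) + X * catalanSeries ^ (j + 3) := by
  rw [pow_succ]
  nth_rewrite 2 [← catalanSeries_sq_mul_X_add_one]
  ring

theorem coeff_catalanSeries_pow (k j : ℕ) :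
    ((coeff k (catalanSeries ^ (j + 1)) : ℕ) : ℚ) = ballot k j := by
  induction k using Nat.strong_induction_on generalizing j with
  | _ k ih =>
    rcases k with _ | k
    · simp [ballot_zero_left]
    induction j with
    | zero => simp [ballot_zero_right]
    | succ j ihj =>
      rw [catalanSeries_pow_add_two, map_add, coeff_succ_X_mul, Nat.cast_add, ihj,
        ih k (by omega), ballot_succ_succ]

theorem sum_antidiagonal_ballot_mul_ballot (i j k : ℕ) :
    ∑ p ∈ antidiagonal k, ballot p.1 i * ballot p.2 j = ballot k (i + j + 1) := by
  have h := congrArg (coeff k) (pow_add catalanSeries (i + 1) (j + 1))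
  rw [show i + 1 + (j + 1) = i + j + 1 + 1 by ring, coeff_mul] at h
  simp only [← coeff_catalanSeries_pow]
  exact_mod_cast h.symm

theorem Fcoeff_eq_ballot_mul_choose (k ℓ m : ℕ) :
    Fcoeff k ℓ m = ballot k ℓ * (2 * k + ℓ + m).choose (2 * k + ℓ) := by
  have hchoose : (k + ℓ + m).choose (k + ℓ) * (2 * k + ℓ + m).choose (k + ℓ + m) =
      (2 * k + ℓ).choose k * (2 * k + ℓ + m).choose (2 * k + ℓ) := by
    rw [Nat.choose_symm_of_eq_add (show 2 * k + ℓ + m = k + ℓ + m + k by ring), mul_comm,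
      mul_comm ((2 * k + ℓ).choose k), Nat.choose_mul (by omega),
      show 2 * k + ℓ + m - k = k + ℓ + m by omega, show 2 * k + ℓ - k = k + ℓ by omega]
  rw [Fcoeff, ballot_eq_div_mul_choose, mul_assoc, mul_assoc]
  congr 1
  exact_mod_cast hchoose

theorem sum_antidiagonal_Fcoeff_mul_Fcoeff (k ℓ m : ℕ) :
    ∑ p ∈ antidiagonal k, ∑ q ∈ antidiagonal ℓ, ∑ r ∈ antidiagonal m,
      Fcoeff p.1 q.1 r.1 * Fcoeff p.2 q.2 r.2 = (ℓ + 1) * Fcoeff k (ℓ + 1) m := by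
  have hq : ∀ q ∈ antidiagonal ℓ, ∑ p ∈ antidiagonal k, ∑ r ∈ antidiagonal m,
      Fcoeff p.1 q.1 r.1 * Fcoeff p.2 q.2 r.2 = Fcoeff k (ℓ + 1) m := by
    intro q hq
    rw [HasAntidiagonal.mem_antidiagonal] at hq
    calc ∑ p ∈ antidiagonal k, ∑ r ∈ antidiagonal m, Fcoeff p.1 q.1 r.1 * Fcoeff p.2 q.2 r.2
        = ∑ p ∈ antidiagonal k, ballot p.1 q.1 * ballot p.2 q.2 *
            (2 * k + (ℓ + 1) + m).choose (2 * k + (ℓ + 1)) := by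
          refine sum_congr rfl fun p hp => ?_
          rw [HasAntidiagonal.mem_antidiagonal] at hp
          simp_rw [Fcoeff_eq_ballot_mul_choose, mul_mul_mul_comm, ← mul_sum]
          rw [show 2 * k + (ℓ + 1) = 2 * p.1 + q.1 + (2 * p.2 + q.2) + 1 by omega]
          congr 1
          exact_mod_cast Nat.sum_antidiagonal_add_choose_mul_add_choose _ _ m
      _ = Fcoeff k (ℓ + 1) m := by
          rw [← sum_mul, sum_antidiagonal_ballot_mul_ballot, hq, Fcoeff_eq_ballot_mul_choose]
  rw [sum_comm, sum_congr rfl hq, sum_const, Nat.card_antidiagonal, nsmul_eq_mul]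
  push_cast
  ring

theorem coeff_FseriesA (e : Fin 3 →₀ ℕ) :
    MvPowerSeries.coeff e FseriesA = Fcoeff (e 0) (e 1) (e 2) := rfl

/-- `∂F/∂y = F²`, stated coefficientwise for the formal power series `F`. -/
theorem typeA_PDE (d : Fin 3 →₀ ℕ) :
    ((d 1 : ℚ) + 1) * MvPowerSeries.coeff (d + Finsupp.single 1 1) FseriesA =
      MvPowerSeries.coeff d (FseriesA * FseriesA) := by
  have hshift : MvPowerSeries.coeff (d + Finsupp.single 1 1) FseriesA =
      Fcoeff (d 0) (d 1 + 1) (d 2) := by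
    simp [coeff_FseriesA]
  rw [hshift, ← sum_antidiagonal_Fcoeff_mul_Fcoeff, MvPowerSeries.coeff_mul_fin_three]
  simp [coeff_FseriesA]
end

section
/- For all nonnegative integers k and ℓ: Σ_{k₁+k₂=k} Σ_{ℓ₁+ℓ₂=ℓ} C(2k₂+ℓ₂-1, k₂) * [(ℓ₁+1)/(2k₁+ℓ₁+1)] * C(2k₁+ℓ₁+1, k₁) = (ℓ+1) * C(2k+ℓ, k), where the sums run over nonnegative integers k₁,k₂,ℓ₁,ℓ₂ with k₁+k₂=k and ℓ₁+ℓ₂=ℓ. -/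
open Finset

/-- Ballot numbers as rationals: `fB k ℓ = C(2k+ℓ,k) - C(2k+ℓ,k-1)`. -/
def fB : ℕ → ℕ → ℚ
  | 0, _ => 1
  | (k+1), ℓ => (Nat.choose (2*(k+1)+ℓ) (k+1) : ℚ) - (Nat.choose (2*(k+1)+ℓ) k : ℚ)

def gB (k ℓ : ℕ) : ℚ := (Nat.choose (2*k+ℓ-1) k : ℚ)

lemma catalan_succ'' (n : ℕ) :
    catalan (n + 1) = ∑ i ∈ range (n + 1), catalan i * catalan (n - i) := by
  rw [catalan_succ, Finset.sum_range]

lemma sum_triangle (n : ℕ) (F : ℕ → ℕ → ℚ) :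
    ∑ j ∈ range (n+1), ∑ a ∈ range (j+1), F a (j - a)
      = ∑ a ∈ range (n+1), ∑ b ∈ range (n+1-a), F a b := by
  induction n with
  | zero => simp
  | succ n ih =>
      rw [sum_range_succ, ih]
      have h1 : ∑ a ∈ range (n+2), ∑ b ∈ range (n+2-a), F a b
          = (∑ a ∈ range (n+1), ∑ b ∈ range (n+2-a), F a b) + F (n+1) 0 := by
        rw [sum_range_succ]
        simp
      rw [h1]
      have h2 : ∀ a ∈ range (n+1), ∑ b ∈ range (n+2-a), F a b
          = (∑ b ∈ range (n+1-a), F a b) + F a (n+1-a) := by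
        intro a ha
        have ha' : a ≤ n := by simpa [Nat.lt_succ_iff] using ha
        have : n+2-a = (n+1-a)+1 := by omega
        rw [this, sum_range_succ]
      rw [sum_congr rfl h2, sum_add_distrib]
      have h3 : ∑ a ∈ range (n+2), F a (n+1-a)
          = (∑ a ∈ range (n+1), F a (n+1-a)) + F (n+1) 0 := by
        rw [sum_range_succ]
        simp
      rw [h3]
      ring

lemma gB_rec (k ℓ : ℕ) : gB (k+1) ℓ + gB k (ℓ+2) = gB (k+1) (ℓ+1) := by
  unfold gB
  have e1 : 2*(k+1)+ℓ-1 = 2*k+ℓ+1 := by omega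
  have e2 : 2*k+(ℓ+2)-1 = 2*k+ℓ+1 := by omega
  have e3 : 2*(k+1)+(ℓ+1)-1 = (2*k+ℓ+1)+1 := by omega
  rw [e1, e2, e3, Nat.choose_succ_succ (2*k+ℓ+1) k]
  push_cast
  ring

lemma fB_rec (k ℓ : ℕ) : fB (k+1) ℓ + fB k (ℓ+2) = fB (k+1) (ℓ+1) := by
  cases k with
  | zero =>
      show ((Nat.choose (2+ℓ) 1 : ℚ) - (Nat.choose (2+ℓ) 0 : ℚ)) + 1
        = (Nat.choose (2+(ℓ+1)) 1 : ℚ) - (Nat.choose (2+(ℓ+1)) 0 : ℚ)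
      simp [Nat.choose_one_right]
      ring
  | succ k =>
      show ((Nat.choose (2*(k+2)+ℓ) (k+2) : ℚ) - (Nat.choose (2*(k+2)+ℓ) (k+1) : ℚ))
          + ((Nat.choose (2*(k+1)+(ℓ+2)) (k+1) : ℚ) - (Nat.choose (2*(k+1)+(ℓ+2)) k : ℚ))
        = (Nat.choose (2*(k+2)+(ℓ+1)) (k+2) : ℚ) - (Nat.choose (2*(k+2)+(ℓ+1)) (k+1) : ℚ)
      have e1 : 2*(k+1)+(ℓ+2) = 2*(k+2)+ℓ := by ring
      have e2 : 2*(k+2)+(ℓ+1) = (2*(k+2)+ℓ)+1 := by ring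
      rw [e1, e2, Nat.choose_succ_succ (2*(k+2)+ℓ) (k+1), Nat.choose_succ_succ (2*(k+2)+ℓ) k]
      push_cast
      ring

lemma fB_zero (k : ℕ) : fB k 0 = (catalan k : ℚ) := by
  cases k with
  | zero => simp [fB]
  | succ k =>
      show ((Nat.choose (2*(k+1)) (k+1) : ℚ) - (Nat.choose (2*(k+1)) k : ℚ)) = _
      have h : Nat.choose (2*(k+1)) (k+1) * (k+1) = Nat.choose (2*(k+1)) k * (k+2) := by
        have := Nat.choose_succ_right_eq (2*(k+1)) k
        have e : 2*(k+1) - k = k+2 := by omega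
        rw [e] at this
        exact this
      have h2 : ((k:ℚ)+2) * (catalan (k+1) : ℚ) = (Nat.choose (2*(k+1)) (k+1) : ℚ) := by
        have := succ_mul_catalan_eq_centralBinom (k+1)
        have e : (k+1).centralBinom = Nat.choose (2*(k+1)) (k+1) := rfl
        rw [e] at this
        exact_mod_cast congrArg (Nat.cast : ℕ → ℚ) this
      have hq : (Nat.choose (2*(k+1)) (k+1) : ℚ) * (k+1)
          = (Nat.choose (2*(k+1)) k : ℚ) * (k+2) := by exact_mod_cast h
      have hk : ((k:ℚ)+2) ≠ 0 := by positivity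
      apply mul_left_cancel₀ hk
      linear_combination hq - h2

lemma fB_eq (k ℓ : ℕ) :
    ((ℓ:ℚ) + 1) / (2*k + ℓ + 1) * (Nat.choose (2*k+ℓ+1) k : ℚ) = fB k ℓ := by
  cases k with
  | zero =>
      have hl : ((ℓ:ℚ) + 1) ≠ 0 := by positivity
      simp [fB, div_self, hl]
  | succ k =>
      show _ = (Nat.choose (2*(k+1)+ℓ) (k+1) : ℚ) - (Nat.choose (2*(k+1)+ℓ) k : ℚ)
      set n := 2*(k+1)+ℓ with hn
      have hD : Nat.choose (n+1) (k+1) = Nat.choose n k + Nat.choose n (k+1) :=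
        Nat.choose_succ_succ n k
      have h : Nat.choose n (k+1) * (k+1) = Nat.choose n k * (k+ℓ+2) := by
        have := Nat.choose_succ_right_eq n k
        have e : n - k = k+ℓ+2 := by omega
        rw [e] at this
        exact this
      have hq : (Nat.choose n (k+1) : ℚ) * (k+1) = (Nat.choose n k : ℚ) * (k+ℓ+2) := by
        exact_mod_cast h
      have e1 : 2*((k:ℚ)+1)+ℓ+1 = (n : ℚ) + 1 := by
        rw [hn]; push_cast; ring
      have e2 : 2*(k+1)+ℓ+1 = n+1 := rfl
      rw [e2, hD]
      push_cast
      rw [e1]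
      have hne : ((n:ℚ)+1) ≠ 0 := by positivity
      field_simp
      have en : (n:ℚ) = 2*k+ℓ+2 := by rw [hn]; push_cast; ring
      rw [en]
      linear_combination (-2:ℚ) * hq

/-- Generic convolution step: multiplying a sequence satisfying the Pascal-type
recurrence by the Catalan generating function. -/
lemma conv_step (h : ℕ → ℕ → ℚ)
    (hrec : ∀ k ℓ, h (k+1) ℓ + h k (ℓ+2) = h (k+1) (ℓ+1))
    (hzero : ∀ ℓ, h 0 ℓ = h 0 (ℓ+1)) :
    ∀ k ℓ, (∑ j ∈ range (k+1), (catalan j : ℚ) * h (k-j) ℓ) = h k (ℓ+1) := by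
  intro k
  induction k using Nat.strong_induction_on with
  | _ k ih =>
    intro ℓ
    match k with
    | 0 => simpa using hzero ℓ
    | (k+1) =>
      rw [sum_range_succ']
      have e0 : (catalan 0 : ℚ) * h (k+1-0) ℓ = h (k+1) ℓ := by simp
      rw [e0]
      have e1 : ∀ j ∈ range (k+1), (catalan (j+1) : ℚ) * h (k+1-(j+1)) ℓ
          = ∑ a ∈ range (j+1), (catalan a : ℚ) * (catalan (j-a) : ℚ) * h ((k-a)-(j-a)) ℓ := by
        intro j hj
        have hj' : j ≤ k := by simpa [Nat.lt_succ_iff] using hj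
        rw [catalan_succ'' j]
        push_cast
        rw [sum_mul]
        refine sum_congr rfl fun a ha => ?_
        have ha' : a ≤ j := by simpa [Nat.lt_succ_iff] using ha
        have : k-j = (k-a)-(j-a) := by omega
        rw [this]
      rw [sum_congr rfl e1,
        sum_triangle k (fun a b => (catalan a : ℚ) * (catalan b : ℚ) * h ((k-a)-b) ℓ)]
      have e2 : ∀ a ∈ range (k+1),
          (∑ b ∈ range (k+1-a), (catalan a : ℚ) * (catalan b : ℚ) * h ((k-a)-b) ℓ)
            = (catalan a : ℚ) * h (k-a) (ℓ+1) := by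
        intro a ha
        have ha' : a ≤ k := by simpa [Nat.lt_succ_iff] using ha
        have hr : k+1-a = (k-a)+1 := by omega
        rw [hr, ← ih (k-a) (by omega) ℓ, mul_sum]
        refine sum_congr rfl fun b hb => ?_
        ring
      rw [sum_congr rfl e2, ih k (by omega) (ℓ+1)]
      have := hrec k ℓ
      linarith

lemma convB : ∀ k ℓ, (∑ j ∈ range (k+1), (catalan j : ℚ) * gB (k-j) ℓ) = gB k (ℓ+1) := by
  refine conv_step gB gB_rec fun ℓ => ?_
  simp [gB]

lemma convF : ∀ k ℓ, (∑ j ∈ range (k+1), (catalan j : ℚ) * fB (k-j) ℓ) = fB k (ℓ+1) := by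
  refine conv_step fB fB_rec fun ℓ => ?_
  simp [fB]

lemma mainT : ∀ ℓ k, (∑ k₁ ∈ range (k+1), ∑ ℓ₁ ∈ range (ℓ+1),
    gB (k-k₁) (ℓ-ℓ₁) * fB k₁ ℓ₁) = ((ℓ:ℚ)+1) * gB k (ℓ+1) := by
  intro ℓ
  induction ℓ with
  | zero =>
      intro k
      have h1 : ∀ k₁ ∈ range (k+1),
          (∑ ℓ₁ ∈ range (0+1), gB (k-k₁) (0-ℓ₁) * fB k₁ ℓ₁)
            = (catalan k₁ : ℚ) * gB (k-k₁) 0 := by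
        intro k₁ _
        rw [sum_range_one, fB_zero]
        simp only [Nat.sub_self]
        ring
      rw [sum_congr rfl h1, convB k 0]
      norm_num
  | succ ℓ ih =>
      intro k
      have hsplit : ∀ k₁ ∈ range (k+1),
          (∑ ℓ₁ ∈ range (ℓ+2), gB (k-k₁) (ℓ+1-ℓ₁) * fB k₁ ℓ₁)
          = (∑ ℓ₁ ∈ range (ℓ+1), gB (k-k₁) (ℓ-ℓ₁) * fB k₁ (ℓ₁+1))
            + (catalan k₁ : ℚ) * gB (k-k₁) (ℓ+1) := by
        intro k₁ _
        rw [sum_range_succ']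
        congr 1
        · refine sum_congr rfl fun ℓ₁ _ => ?_
          have e : ℓ+1-(ℓ₁+1) = ℓ-ℓ₁ := by omega
          rw [e]
        · simp only [Nat.sub_zero, fB_zero]; ring
      rw [sum_congr rfl hsplit, sum_add_distrib, convB k (ℓ+1)]
      have hmain : ∀ k₁ ∈ range (k+1),
          (∑ ℓ₁ ∈ range (ℓ+1), gB (k-k₁) (ℓ-ℓ₁) * fB k₁ (ℓ₁+1))
          = ∑ j ∈ range (k₁+1), (catalan j : ℚ) *
              ∑ ℓ₁ ∈ range (ℓ+1), gB ((k-j)-(k₁-j)) (ℓ-ℓ₁) * fB (k₁-j) ℓ₁ := by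
        intro k₁ hk₁
        have hk₁' : k₁ ≤ k := by simpa [Nat.lt_succ_iff] using hk₁
        have e1 : ∀ ℓ₁ ∈ range (ℓ+1), gB (k-k₁) (ℓ-ℓ₁) * fB k₁ (ℓ₁+1)
            = ∑ j ∈ range (k₁+1),
                (catalan j : ℚ) * (gB (k-k₁) (ℓ-ℓ₁) * fB (k₁-j) ℓ₁) := by
          intro ℓ₁ _
          rw [← convF k₁ ℓ₁, mul_sum]
          refine sum_congr rfl fun j _ => ?_
          ring
        rw [sum_congr rfl e1, sum_comm]
        refine sum_congr rfl fun j hj => ?_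
        have hj' : j ≤ k₁ := by simpa [Nat.lt_succ_iff] using hj
        rw [mul_sum]
        refine sum_congr rfl fun ℓ₁ _ => ?_
        have e : k-k₁ = (k-j)-(k₁-j) := by omega
        rw [← e]
      rw [sum_congr rfl hmain,
        sum_triangle k (fun j i => (catalan j : ℚ) *
          ∑ ℓ₁ ∈ range (ℓ+1), gB ((k-j)-i) (ℓ-ℓ₁) * fB i ℓ₁)]
      have hcol : ∀ j ∈ range (k+1),
          (∑ i ∈ range (k+1-j), (catalan j : ℚ) *
            ∑ ℓ₁ ∈ range (ℓ+1), gB ((k-j)-i) (ℓ-ℓ₁) * fB i ℓ₁)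
          = (catalan j : ℚ) * (((ℓ:ℚ)+1) * gB (k-j) (ℓ+1)) := by
        intro j hj
        have hj' : j ≤ k := by simpa [Nat.lt_succ_iff] using hj
        have e : k+1-j = (k-j)+1 := by omega
        rw [e, ← mul_sum, ih (k-j)]
      rw [sum_congr rfl hcol]
      have e2 : ∀ j ∈ range (k+1),
          (catalan j : ℚ) * (((ℓ:ℚ)+1) * gB (k-j) (ℓ+1))
          = ((ℓ:ℚ)+1) * ((catalan j : ℚ) * gB (k-j) (ℓ+1)) := by
        intro j _; ring
      rw [sum_congr rfl e2, ← mul_sum, convB k (ℓ+1)]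
      push_cast
      ring

/-- Carlitz-type convolution identity used in the type `B` computation (the truncated
subtraction `2k₂+ℓ₂-1` encodes the convention `C(-1,0) = 1` when `k₂ = ℓ₂ = 0`). -/
theorem carlitz_convolution_B1 (k ℓ : ℕ) :
    ∑ k₁ ∈ range (k + 1), ∑ ℓ₁ ∈ range (ℓ + 1),
        (Nat.choose (2 * (k - k₁) + (ℓ - ℓ₁) - 1) (k - k₁) : ℚ) *
          (((ℓ₁ + 1 : ℚ) / (2 * k₁ + ℓ₁ + 1)) * (Nat.choose (2 * k₁ + ℓ₁ + 1) k₁)) =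
      (ℓ + 1 : ℚ) * (Nat.choose (2 * k + ℓ) k) := by
  have h : ∀ k₁ ∈ range (k+1), ∀ ℓ₁ ∈ range (ℓ+1),
      (Nat.choose (2 * (k - k₁) + (ℓ - ℓ₁) - 1) (k - k₁) : ℚ) *
          (((ℓ₁ + 1 : ℚ) / (2 * k₁ + ℓ₁ + 1)) * (Nat.choose (2 * k₁ + ℓ₁ + 1) k₁))
        = gB (k-k₁) (ℓ-ℓ₁) * fB k₁ ℓ₁ := by
    intro k₁ _ ℓ₁ _
    rw [← fB_eq k₁ ℓ₁]
    unfold gB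
    ring
  calc ∑ k₁ ∈ range (k + 1), ∑ ℓ₁ ∈ range (ℓ + 1),
        (Nat.choose (2 * (k - k₁) + (ℓ - ℓ₁) - 1) (k - k₁) : ℚ) *
          (((ℓ₁ + 1 : ℚ) / (2 * k₁ + ℓ₁ + 1)) * (Nat.choose (2 * k₁ + ℓ₁ + 1) k₁))
      = ∑ k₁ ∈ range (k+1), ∑ ℓ₁ ∈ range (ℓ+1), gB (k-k₁) (ℓ-ℓ₁) * fB k₁ ℓ₁ := by
        refine sum_congr rfl fun k₁ hk₁ => sum_congr rfl fun ℓ₁ hℓ₁ => ?_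
        exact h k₁ hk₁ ℓ₁ hℓ₁
    _ = ((ℓ:ℚ)+1) * gB k (ℓ+1) := mainT ℓ k
    _ = (ℓ + 1 : ℚ) * (Nat.choose (2 * k + ℓ) k) := by
        unfold gB
        have e : 2*k+(ℓ+1)-1 = 2*k+ℓ := by omega
        rw [e]
end

section
/- For all nonnegative integers k and ℓ: Σ_{k₁+k₂=k} Σ_{ℓ₁+ℓ₂=ℓ} C(2k₂+ℓ₂, k₂) * [(ℓ₁+1)/(2k₁+ℓ₁+1)] * C(2k₁+ℓ₁+1, k₁) = (ℓ+1) * C(2k+ℓ+1, k), where the sums run over nonnegative integers with k₁+k₂=k, ℓ₁+ℓ₂=ℓ. -/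
open Finset

/-- Ballot numbers `C(2k+m, k) - C(2k+m, k-1)` as rationals. -/
private def fb (m : ℕ) : ℕ → ℚ
  | 0 => 1
  | (k+1) => (Nat.choose (2*(k+1)+m) (k+1) : ℚ) - (Nat.choose (2*(k+1)+m) k : ℚ)

private lemma fb_zero (m : ℕ) : fb m 0 = 1 := rfl

private lemma fb_zero_succ (k : ℕ) : fb 0 (k+1) = fb 1 k := by
  cases k with
  | zero => norm_num [fb]
  | succ j =>
    show (Nat.choose (2*(j+2)+0) (j+2) : ℚ) - (Nat.choose (2*(j+2)+0) (j+1) : ℚ)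
        = (Nat.choose (2*(j+1)+1) (j+1) : ℚ) - (Nat.choose (2*(j+1)+1) j : ℚ)
    have h1 : 2*(j+2)+0 = (2*j+3)+1 := by ring
    have h2 : 2*(j+1)+1 = 2*j+3 := by ring
    have h3 : (2*j+3).choose (j+2) = (2*j+3).choose (j+1) := by
      rw [← Nat.choose_symm (by omega : j+1 ≤ 2*j+3)]
      congr 1; omega
    rw [h1, h2, Nat.choose_succ_succ (2*j+3) (j+1), Nat.choose_succ_succ (2*j+3) j, h3]
    push_cast
    ring

private lemma fb_succ_succ (m k : ℕ) : fb (m+1) (k+1) = fb m (k+1) + fb (m+2) k := by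
  cases k with
  | zero =>
    show (Nat.choose (2*1+(m+1)) 1 : ℚ) - (Nat.choose (2*1+(m+1)) 0 : ℚ)
        = ((Nat.choose (2*1+m) 1 : ℚ) - (Nat.choose (2*1+m) 0 : ℚ)) + 1
    rw [Nat.choose_one_right, Nat.choose_zero_right, Nat.choose_one_right,
      Nat.choose_zero_right]
    push_cast; ring
  | succ j =>
    show (Nat.choose (2*(j+2)+(m+1)) (j+2) : ℚ) - (Nat.choose (2*(j+2)+(m+1)) (j+1) : ℚ)
        = ((Nat.choose (2*(j+2)+m) (j+2) : ℚ) - (Nat.choose (2*(j+2)+m) (j+1) : ℚ))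
          + ((Nat.choose (2*(j+1)+(m+2)) (j+1) : ℚ) - (Nat.choose (2*(j+1)+(m+2)) j : ℚ))
    have h1 : 2*(j+2)+(m+1) = (2*j+m+4)+1 := by ring
    have h2 : 2*(j+2)+m = 2*j+m+4 := by ring
    have h3 : 2*(j+1)+(m+2) = 2*j+m+4 := by ring
    rw [h1, h2, h3, Nat.choose_succ_succ (2*j+m+4) (j+1), Nat.choose_succ_succ (2*j+m+4) j]
    push_cast
    ring

private lemma fb_mul (m k : ℕ) :
    ((2*k+m+1 : ℕ) : ℚ) * fb m k = ((m : ℚ) + 1) * (Nat.choose (2*k+m+1) k : ℚ) := by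
  cases k with
  | zero => simp [fb]
  | succ j =>
    show ((2*(j+1)+m+1 : ℕ) : ℚ) *
        ((Nat.choose (2*(j+1)+m) (j+1) : ℚ) - (Nat.choose (2*(j+1)+m) j : ℚ))
      = ((m : ℚ) + 1) * (Nat.choose (2*(j+1)+m+1) (j+1) : ℚ)
    have h1 : 2*(j+1)+m = 2*j+m+2 := by ring
    have h2 : 2*(j+1)+m+1 = 2*j+m+3 := by ring
    have e1 : (2*j+m+3) * (2*j+m+2).choose (j+1) = (2*j+m+3).choose (j+2) * (j+2) := by
      have := Nat.add_one_mul_choose_eq (2*j+m+2) (j+1)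
      simpa [Nat.succ_eq_add_one] using this
    have e2 : (2*j+m+3) * (2*j+m+2).choose j = (2*j+m+3).choose (j+1) * (j+1) := by
      have := Nat.add_one_mul_choose_eq (2*j+m+2) j
      simpa [Nat.succ_eq_add_one] using this
    have e3 : (2*j+m+3).choose (j+2) * (j+2) = (2*j+m+3).choose (j+1) * (j+m+2) := by
      rw [Nat.choose_succ_right_eq (2*j+m+3) (j+1)]
      congr 1
      omega
    have q1 : ((2*j+m+3 : ℕ) : ℚ) * ((2*j+m+2).choose (j+1) : ℚ)
        = ((2*j+m+3).choose (j+1) : ℚ) * ((j : ℚ)+(m : ℚ)+2) := by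
      have h : (2*j+m+3) * (2*j+m+2).choose (j+1)
          = (2*j+m+3).choose (j+1) * (j+m+2) := by rw [e1, e3]
      exact_mod_cast congrArg (Nat.cast (R := ℚ)) h
    have q2 : ((2*j+m+3 : ℕ) : ℚ) * ((2*j+m+2).choose j : ℚ)
        = ((2*j+m+3).choose (j+1) : ℚ) * ((j : ℚ)+1) := by
      exact_mod_cast congrArg (Nat.cast (R := ℚ)) e2
    rw [h1, show 2*j+m+2+1 = 2*j+m+3 from by ring]
    push_cast at q1 q2 ⊢
    nlinarith [q1, q2]

private lemma fb_frac (m k : ℕ) :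
    ((m : ℚ) + 1) / (2*(k : ℚ) + m + 1) * (Nat.choose (2*k+m+1) k : ℚ) = fb m k := by
  have hne : (2*(k : ℚ) + (m : ℚ) + 1) ≠ 0 := by positivity
  have h := fb_mul m k
  push_cast at h
  field_simp
  linarith [h]

/-- Rothe–Hagen style convolution. -/
private lemma conv : ∀ k m c : ℕ,
    ∑ k₁ ∈ range (k+1), fb m k₁ * (Nat.choose (2*(k-k₁)+c) (k-k₁) : ℚ)
      = (Nat.choose (2*k+m+c+1) k : ℚ) := by
  intro k
  induction k using Nat.strong_induction_on with
  | _ k IH =>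
  cases k with
  | zero => intro m c; simp [fb]
  | succ K =>
    intro m
    induction m with
    | zero =>
      intro c
      induction c with
      | zero =>
        rw [Finset.sum_range_succ']
        have e1 : ∀ i ∈ range (K+1),
            fb 0 (i+1) * (Nat.choose (2*((K+1)-(i+1))+0) ((K+1)-(i+1)) : ℚ)
            = fb 1 i * (Nat.choose (2*(K-i)+0) (K-i) : ℚ) := by
          intro i hi
          have hd : (K+1)-(i+1) = K-i := by omega
          rw [fb_zero_succ, hd]
        rw [Finset.sum_congr rfl e1, IH K (by omega) 1 0]
        have h1 : 2*K+1+0+1 = 2*K+2 := by ring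
        have h2 : 2*((K+1)-0)+0 = 2*K+2 := by omega
        have h3 : (K+1)-0 = K+1 := by omega
        have h4 : 2*(K+1)+0+0+1 = (2*K+2)+1 := by ring
        rw [h1, h2, h3, h4, Nat.choose_succ_succ (2*K+2) K, fb_zero]
        push_cast
        ring
      | succ c ihc =>
        rw [Finset.sum_range_succ]
        have e1 : ∀ k₁ ∈ range (K+1),
            fb 0 k₁ * (Nat.choose (2*((K+1)-k₁)+(c+1)) ((K+1)-k₁) : ℚ)
            = fb 0 k₁ * (Nat.choose (2*((K+1)-k₁)+c) ((K+1)-k₁) : ℚ)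
              + fb 0 k₁ * (Nat.choose (2*(K-k₁)+(c+2)) (K-k₁) : ℚ) := by
          intro k₁ hk₁
          have hk : k₁ ≤ K := Nat.lt_succ_iff.mp (mem_range.mp hk₁)
          have hd : (K+1)-k₁ = (K-k₁)+1 := by omega
          rw [hd]
          have hp : (2*((K-k₁)+1)+(c+1)).choose ((K-k₁)+1)
              = (2*((K-k₁)+1)+c).choose ((K-k₁)+1) + (2*(K-k₁)+(c+2)).choose (K-k₁) := by
            have h1 : 2*((K-k₁)+1)+(c+1) = (2*(K-k₁)+(c+2))+1 := by ring
            have h2 : (2*(K-k₁)+(c+2)).choose ((K-k₁)+1)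
                = (2*((K-k₁)+1)+c).choose ((K-k₁)+1) := by congr 1; ring
            rw [h1, Nat.choose_succ_succ, h2]
            exact Nat.add_comm _ _
          rw [hp]
          push_cast
          ring
        rw [Finset.sum_congr rfl e1, Finset.sum_add_distrib, IH K (by omega) 0 (c+2)]
        rw [Finset.sum_range_succ] at ihc
        simp only [Nat.sub_self, Nat.mul_zero, Nat.zero_add, Nat.choose_zero_right,
          Nat.cast_one, mul_one] at ihc ⊢
        have hp : (2*(K+1)+0+(c+1)+1).choose (K+1)
            = (2*K+0+(c+2)+1).choose K + (2*(K+1)+0+c+1).choose (K+1) := by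
          have h1 : 2*(K+1)+0+(c+1)+1 = (2*K+c+3)+1 := by ring
          have h2 : 2*K+0+(c+2)+1 = 2*K+c+3 := by ring
          have h3 : 2*(K+1)+0+c+1 = 2*K+c+3 := by ring
          rw [h1, h2, h3, Nat.choose_succ_succ]
        rw [hp]
        push_cast
        linarith [ihc]
    | succ m ihm =>
      intro c
      rw [Finset.sum_range_succ']
      have e1 : ∀ i ∈ range (K+1),
          fb (m+1) (i+1) * (Nat.choose (2*((K+1)-(i+1))+c) ((K+1)-(i+1)) : ℚ)
          = fb m (i+1) * (Nat.choose (2*(K-i)+c) (K-i) : ℚ)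
            + fb (m+2) i * (Nat.choose (2*(K-i)+c) (K-i) : ℚ) := by
        intro i hi
        have hd : (K+1)-(i+1) = K-i := by omega
        rw [hd, fb_succ_succ, add_mul]
      rw [Finset.sum_congr rfl e1, Finset.sum_add_distrib, IH K (by omega) (m+2) c]
      have A := ihm c
      rw [Finset.sum_range_succ'] at A
      have e2 : ∀ i ∈ range (K+1),
          fb m (i+1) * (Nat.choose (2*((K+1)-(i+1))+c) ((K+1)-(i+1)) : ℚ)
          = fb m (i+1) * (Nat.choose (2*(K-i)+c) (K-i) : ℚ) := by
        intro i hi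
        have hd : (K+1)-(i+1) = K-i := by omega
        rw [hd]
      rw [Finset.sum_congr rfl e2] at A
      simp only [Nat.sub_zero, fb_zero, one_mul] at A ⊢
      have hp : (2*(K+1)+(m+1)+c+1).choose (K+1)
          = (2*K+(m+2)+c+1).choose K + (2*(K+1)+m+c+1).choose (K+1) := by
        have h1 : 2*(K+1)+(m+1)+c+1 = (2*K+m+c+3)+1 := by ring
        have h2 : 2*K+(m+2)+c+1 = 2*K+m+c+3 := by ring
        have h3 : 2*(K+1)+m+c+1 = 2*K+m+c+3 := by ring
        rw [h1, h2, h3, Nat.choose_succ_succ]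
      rw [hp]
      push_cast
      linarith [A]

/-- Second Carlitz-type convolution identity used in the type `B` computation. -/
theorem carlitz_convolution_B2 (k ℓ : ℕ) :
    ∑ k₁ ∈ range (k + 1), ∑ ℓ₁ ∈ range (ℓ + 1),
        (Nat.choose (2 * (k - k₁) + (ℓ - ℓ₁)) (k - k₁) : ℚ) *
          (((ℓ₁ + 1 : ℚ) / (2 * k₁ + ℓ₁ + 1)) * (Nat.choose (2 * k₁ + ℓ₁ + 1) k₁)) =
      (ℓ + 1 : ℚ) * (Nat.choose (2 * k + ℓ + 1) k) := by
  rw [Finset.sum_comm]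
  have e1 : ∀ ℓ₁ ∈ range (ℓ + 1),
      ∑ k₁ ∈ range (k + 1),
        (Nat.choose (2 * (k - k₁) + (ℓ - ℓ₁)) (k - k₁) : ℚ) *
          (((ℓ₁ + 1 : ℚ) / (2 * k₁ + ℓ₁ + 1)) * (Nat.choose (2 * k₁ + ℓ₁ + 1) k₁))
      = (Nat.choose (2 * k + ℓ + 1) k : ℚ) := by
    intro ℓ₁ hℓ₁
    have hℓ : ℓ₁ ≤ ℓ := Nat.lt_succ_iff.mp (mem_range.mp hℓ₁)
    have e2 : ∀ k₁ ∈ range (k + 1),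
        (Nat.choose (2 * (k - k₁) + (ℓ - ℓ₁)) (k - k₁) : ℚ) *
          (((ℓ₁ + 1 : ℚ) / (2 * k₁ + ℓ₁ + 1)) * (Nat.choose (2 * k₁ + ℓ₁ + 1) k₁))
        = fb ℓ₁ k₁ * (Nat.choose (2 * (k - k₁) + (ℓ - ℓ₁)) (k - k₁) : ℚ) := by
      intro k₁ hk₁
      rw [← fb_frac ℓ₁ k₁]
      ring
    rw [Finset.sum_congr rfl e2, conv k ℓ₁ (ℓ - ℓ₁)]
    congr 2
    omega
  rw [Finset.sum_congr rfl e1, Finset.sum_const, card_range, nsmul_eq_mul]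
  push_cast
  ring
end

section
/- Let NC(n) denote the lattice of noncrossing partitions of {1,...,n} ordered by refinement, which is graded of rank n-1. Then the number of elements of NC(n) is the Catalan number C(2n, n)/(n+1). -/
open Finset

def IsNoncrossing {n : ℕ} (P : Finpartition (Finset.univ : Finset (Fin n))) : Prop :=
  ∀ B ∈ P.parts, ∀ C ∈ P.parts, ∀ a ∈ B, ∀ c ∈ B, ∀ b ∈ C, ∀ d ∈ C,
    a < b → b < c → c < d → B = C

/-- `f` encodes a noncrossing partition of `{0,…,n-1}` by sending each element to the
minimum of its block (and everything `≥ n` to `0`). -/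
def NCFun (n : ℕ) (f : ℕ → ℕ) : Prop :=
  (∀ i, f i ≤ i) ∧ (∀ i, f (f i) = f i) ∧ (∀ i, n ≤ i → f i = 0) ∧
  (∀ a b c d, a < b → b < c → c < d → d < n → f a = f c → f b = f d → f a = f b)

abbrev NCRep (n : ℕ) : Type := {f : ℕ → ℕ // NCFun n f}

instance NCRep.finite (n : ℕ) : Finite (NCRep n) := by
  have : Function.Injective
      (fun f : NCRep n => (fun i : Fin n => (⟨f.1 i, lt_of_le_of_lt (f.2.1 i) i.2⟩ : Fin n))) := by
    rintro ⟨f, hf⟩ ⟨g, hg⟩ h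
    ext i
    rcases lt_or_ge i n with hi | hi
    · have := congrFun h ⟨i, hi⟩
      simpa [Fin.mk.injEq] using this
    · show f i = g i
      rw [hf.2.2.1 i hi, hg.2.2.1 i hi]
  exact Finite.of_injective _ this

section equivRep

variable {n : ℕ}

noncomputable def toFun (P : Finpartition (Finset.univ : Finset (Fin n))) : ℕ → ℕ :=
  fun i => if h : i < n then ((P.part ⟨i, h⟩).min' ⟨⟨i, h⟩, P.mem_part (mem_univ _)⟩ : Fin n) else 0

lemma part_nonempty (P : Finpartition (Finset.univ : Finset (Fin n))) (i : Fin n) :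
    (P.part i).Nonempty := ⟨i, P.mem_part (mem_univ _)⟩

lemma min'_mem_part (P : Finpartition (Finset.univ : Finset (Fin n))) (i : Fin n) :
    (P.part i).min' (part_nonempty P i) ∈ P.part i := min'_mem _ _

lemma part_min' (P : Finpartition (Finset.univ : Finset (Fin n))) (i : Fin n) :
    P.part ((P.part i).min' (part_nonempty P i)) = P.part i :=
  P.part_eq_of_mem (P.part_mem.2 (mem_univ _)) (min'_mem_part P i)

lemma toFun_eq_iff (P : Finpartition (Finset.univ : Finset (Fin n))) (i j : Fin n) :
    toFun P i = toFun P j ↔ P.part i = P.part j := by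
  simp only [toFun, i.isLt, j.isLt, dif_pos, Fin.val_eq_val]
  constructor
  · intro h
    rw [← part_min' P i, ← part_min' P j, h]
  · intro h
    congr 1

lemma toFun_lt (P : Finpartition (Finset.univ : Finset (Fin n))) (i : ℕ) (h : i < n) :
    toFun P i < n := by
  simp only [toFun, h, dif_pos]
  exact Fin.isLt _

lemma ncFun_toFun (P : Finpartition (Finset.univ : Finset (Fin n))) (hP : IsNoncrossing P) :
    NCFun n (toFun P) := by
  have key : ∀ i : ℕ, ∀ h : i < n,
      toFun P i = ((P.part ⟨i, h⟩).min' (part_nonempty P _) : Fin n) := by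
    intro i h; simp [toFun, h]
  refine ⟨?_, ?_, ?_, ?_⟩
  · intro i
    rcases lt_or_ge i n with h | h
    · rw [key i h]
      exact min'_le _ _ (P.mem_part (mem_univ _))
    · simp [toFun, not_lt.2 h]
  · intro i
    rcases lt_or_ge i n with h | h
    · have h2 := toFun_lt P i h
      have e : (⟨toFun P i, h2⟩ : Fin n) = (P.part ⟨i, h⟩).min' (part_nonempty P _) :=
        Fin.ext (key i h)
      have hpp : P.part ⟨toFun P i, h2⟩ = P.part ⟨i, h⟩ := by
        rw [e]; exact part_min' P _
      have e2 : (P.part ⟨toFun P i, h2⟩).min' (part_nonempty P _)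
          = (P.part ⟨i, h⟩).min' (part_nonempty P _) := by simp only [hpp]
      rw [key _ h2, e2]
      exact (key i h).symm
    · have h0 : toFun P i = 0 := by simp [toFun, not_lt.2 h]
      rw [h0]
      rcases Nat.eq_zero_or_pos n with hn | hn
      · simp [toFun, hn]
      · have : toFun P 0 ≤ 0 := by
          rw [key 0 hn]
          exact_mod_cast Fin.le_def.1 (min'_le _ _ (P.mem_part (mem_univ (⟨0, hn⟩ : Fin n))))
        omega
  · intro i h; simp [toFun, not_lt.2 h]
  · intro a b c d hab hbc hcd hdn hac hbd
    have han : a < n := lt_trans (lt_trans (lt_trans hab hbc) hcd) hdn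
    have hbn : b < n := lt_trans (lt_trans hbc hcd) hdn
    have hcn : c < n := lt_trans hcd hdn
    have hac' : P.part ⟨a, han⟩ = P.part ⟨c, hcn⟩ := (toFun_eq_iff P _ _).1 hac
    have hbd' : P.part ⟨b, hbn⟩ = P.part ⟨d, hdn⟩ := (toFun_eq_iff P _ _).1 hbd
    have := hP (P.part ⟨a, han⟩) (P.part_mem.2 (mem_univ _)) (P.part ⟨b, hbn⟩)
      (P.part_mem.2 (mem_univ _)) ⟨a, han⟩ (P.mem_part (mem_univ _)) ⟨c, hcn⟩
      (hac' ▸ P.mem_part (mem_univ _)) ⟨b, hbn⟩ (P.mem_part (mem_univ _)) ⟨d, hdn⟩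
      (hbd' ▸ P.mem_part (mem_univ _)) hab hbc hcd
    exact (toFun_eq_iff P _ _).2 this

def kerSetoid (f : NCRep n) : Setoid (Fin n) := Setoid.ker (fun i : Fin n => f.1 i)

instance (f : NCRep n) : DecidableRel (kerSetoid f).r := fun a b => Nat.decEq _ _

def ofRep (f : NCRep n) : Finpartition (Finset.univ : Finset (Fin n)) :=
  Finpartition.ofSetoid (kerSetoid f)

lemma mem_part_ofRep (f : NCRep n) (a b : Fin n) :
    b ∈ (ofRep f).part a ↔ f.1 a = f.1 b :=
  Finpartition.mem_part_ofSetoid_iff_rel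

lemma part_eq_part_ofRep (f : NCRep n) (a b : Fin n) :
    (ofRep f).part a = (ofRep f).part b ↔ f.1 a = f.1 b := by
  constructor
  · intro h
    have : b ∈ (ofRep f).part a := by
      rw [h]; exact (ofRep f).mem_part (mem_univ _)
    exact (mem_part_ofRep f a b).1 this
  · intro h
    apply Finpartition.part_eq_of_mem _ ((ofRep f).part_mem.2 (mem_univ _))
    exact (mem_part_ofRep f b a).2 h.symm

lemma isNoncrossing_ofRep (f : NCRep n) : IsNoncrossing (ofRep f) := by
  intro B hB C hC a ha c hc b hb d hd hab hbc hcd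
  have hBa : (ofRep f).part a = B := Finpartition.part_eq_of_mem _ hB ha
  have hCb : (ofRep f).part b = C := Finpartition.part_eq_of_mem _ hC hb
  have hac : f.1 a = f.1 c := (mem_part_ofRep f a c).1 (by rw [hBa]; exact hc)
  have hbd : f.1 b = f.1 d := (mem_part_ofRep f b d).1 (by rw [hCb]; exact hd)
  have := f.2.2.2.2 a b c d hab hbc hcd d.2 hac hbd
  rw [← hBa, ← hCb]
  exact (part_eq_part_ofRep f a b).2 this

lemma toFun_ofRep (f : NCRep n) : toFun (ofRep f) = f.1 := by
  funext i
  rcases lt_or_ge i n with h | h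
  · have hm : f.1 i < n := lt_of_le_of_lt (f.2.1 i) h
    set m : Fin n := ⟨f.1 i, hm⟩ with hmdef
    have hmem : m ∈ (ofRep f).part ⟨i, h⟩ := (mem_part_ofRep f _ _).2 (f.2.2.1 i).symm
    have hle : ∀ j ∈ (ofRep f).part ⟨i, h⟩, m ≤ j := by
      intro j hj
      have : f.1 i = f.1 j := (mem_part_ofRep f _ _).1 hj
      refine Fin.le_def.2 ?_
      show f.1 i ≤ (j : ℕ)
      rw [this]
      exact f.2.1 j
    have : toFun (ofRep f) i = (((ofRep f).part ⟨i, h⟩).min' (part_nonempty _ _) : Fin n) := by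
      simp [toFun, h]
    rw [this]
    have := le_antisymm (min'_le _ _ hmem) (le_min' _ _ _ hle)
    rw [this]
  · have := f.2.2.1
    simp [toFun, not_lt.2 h, f.2.2.2.1 i h]

lemma ofRep_toFun (P : Finpartition (Finset.univ : Finset (Fin n)))
    (hP : IsNoncrossing P) : ofRep ⟨toFun P, ncFun_toFun P hP⟩ = P := by
  set f : NCRep n := ⟨toFun P, ncFun_toFun P hP⟩ with hf
  have hpart : ∀ a : Fin n, (ofRep f).part a = P.part a := by
    intro a
    ext x
    rw [mem_part_ofRep]
    show toFun P a = toFun P x ↔ _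
    rw [toFun_eq_iff]
    rw [P.mem_part_iff_part_eq_part (mem_univ x) (mem_univ a)]
    exact ⟨fun h => h.symm, fun h => h.symm⟩
  ext B
  constructor
  · intro hB
    obtain ⟨a, ha⟩ := Finpartition.nonempty_of_mem_parts _ hB
    rw [← Finpartition.part_eq_of_mem _ hB ha, hpart]
    exact P.part_mem.2 (mem_univ _)
  · intro hB
    obtain ⟨a, ha⟩ := Finpartition.nonempty_of_mem_parts _ hB
    rw [← Finpartition.part_eq_of_mem _ hB ha, ← hpart]
    exact (ofRep f).part_mem.2 (mem_univ _)

noncomputable def ncEquivRep (n : ℕ) :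
    {P : Finpartition (Finset.univ : Finset (Fin n)) // IsNoncrossing P} ≃ NCRep n where
  toFun := fun P => ⟨toFun P.1, ncFun_toFun P.1 P.2⟩
  invFun := fun f => ⟨ofRep f, isNoncrossing_ofRep f⟩
  left_inv := fun P => Subtype.ext (ofRep_toFun P.1 P.2)
  right_inv := fun f => Subtype.ext (toFun_ofRep f)

end equivRep

section recurrence

variable {n k : ℕ} {f g1 g2 : ℕ → ℕ}

/-- Values of `f` at positions in `[k, n]` are `0` or greater than `k`,
provided `f k = 0` when `k ≤ n`. -/
lemma ncfun_big (hf : NCFun (n+1) f) (hk3 : k ≤ n → f k = 0)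
    {j : ℕ} (hj : k ≤ j) (hjn : j ≤ n) : f j = 0 ∨ k < f j := by
  obtain ⟨hle, hid, hz, hnc⟩ := hf
  by_contra h
  push_neg at h
  obtain ⟨h0, hk'⟩ := h
  have hfk : f k = 0 := hk3 (le_trans hj hjn)
  have hne : f j ≠ k := by
    intro e
    have h1 := hid j
    rw [e] at h1
    rw [hfk] at h1
    exact h0 (by omega)
  have h1 : 0 < f j := Nat.pos_of_ne_zero h0
  have h2 : f j < k := lt_of_le_of_ne hk' hne
  have hjk : j ≠ k := fun e => h0 (e ▸ hfk)
  have hjk' : k < j := lt_of_le_of_ne hj (Ne.symm hjk)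
  have f0 : f 0 = 0 := Nat.le_zero.1 (hle 0)
  have := hnc 0 (f j) k j h1 h2 hjk' (by omega) (by rw [f0, hfk]) (hid j)
  rw [f0, hid j] at this
  exact h0 this.symm

def fwd1 (f : ℕ → ℕ) (k : ℕ) : ℕ → ℕ := fun i => if i + 1 < k then f (i+1) - 1 else 0

def fwd2 (f : ℕ → ℕ) (k n : ℕ) : ℕ → ℕ :=
  fun i => if i + k ≤ n then (if f (i+k) = 0 then k else f (i+k)) - k else 0

def bwd (k n : ℕ) (g1 g2 : ℕ → ℕ) : ℕ → ℕ := fun i =>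
  if i = 0 then 0 else if i < k then g1 (i-1) + 1
  else if i ≤ n then (if g2 (i-k) = 0 then 0 else g2 (i-k) + k) else 0

lemma ncfun_fwd1 (hf : NCFun (n+1) f) (hk2 : k ≤ n+1)
    (hk4 : ∀ j, 0 < j → j < k → f j ≠ 0) :
    NCFun (k-1) (fwd1 f k) := by
  obtain ⟨hle, hid, hz, hnc⟩ := hf
  have pos : ∀ j, 0 < j → j < k → 0 < f j := fun j h1 h2 => Nat.pos_of_ne_zero (hk4 j h1 h2)
  refine ⟨?_, ?_, ?_, ?_⟩
  · intro i
    unfold fwd1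
    split
    · have := hle (i+1); omega
    · omega
  · intro i
    by_cases h : i + 1 < k
    · have hp := pos (i+1) (by omega) h
      have hlei := hle (i+1)
      have e1 : fwd1 f k i = f (i+1) - 1 := if_pos h
      rw [e1]
      have h2 : f (i+1) - 1 + 1 = f (i+1) := by omega
      show (if f (i+1) - 1 + 1 < k then f (f (i+1) - 1 + 1) - 1 else 0) = f (i+1) - 1
      rw [h2, if_pos (by omega : f (i+1) < k), hid]
    · have e1 : fwd1 f k i = 0 := if_neg h
      rw [e1]
      show (if 0 + 1 < k then f (0+1) - 1 else 0) = 0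
      split
      · have := hle 1; simp only [zero_add]; omega
      · rfl
  · intro i hi
    exact if_neg (by omega)
  · intro a b c d hab hbc hcd hd hac hbd
    have hak : a + 1 < k := by omega
    have hbk : b + 1 < k := by omega
    have hck : c + 1 < k := by omega
    have hdk : d + 1 < k := by omega
    simp only [fwd1] at hac hbd
    rw [if_pos hak, if_pos hck] at hac
    rw [if_pos hbk, if_pos hdk] at hbd
    have ha' := pos (a+1) (by omega) hak
    have hb' := pos (b+1) (by omega) hbk
    have hc' := pos (c+1) (by omega) hck
    have hd' := pos (d+1) (by omega) hdk
    have hac' : f (a+1) = f (c+1) := by omega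
    have hbd' : f (b+1) = f (d+1) := by omega
    have := hnc (a+1) (b+1) (c+1) (d+1) (by omega) (by omega) (by omega) (by omega) hac' hbd'
    show (if a + 1 < k then f (a+1) - 1 else 0) = (if b + 1 < k then f (b+1) - 1 else 0)
    rw [if_pos hak, if_pos hbk]
    omega

lemma fwd2_zero (hk3 : k ≤ n → f k = 0) : fwd2 f k n 0 = 0 := by
  unfold fwd2
  split
  · rename_i h
    rw [zero_add]
    rw [hk3 (by omega)]
    simp
  · rfl

lemma ncfun_fwd2 (hf : NCFun (n+1) f) (hk3 : k ≤ n → f k = 0) :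
    NCFun (n+1-k) (fwd2 f k n) := by
  have big : ∀ j, k ≤ j → j ≤ n → f j = 0 ∨ k < f j := fun j hj hjn => ncfun_big hf hk3 hj hjn
  obtain ⟨hle, hid, hz, hnc⟩ := hf
  have equiv : ∀ x y, x + k ≤ n → y + k ≤ n →
      (fwd2 f k n x = fwd2 f k n y ↔ f (x+k) = f (y+k)) := by
    intro x y hx hy
    have bx := big (x+k) (by omega) (by omega)
    have by' := big (y+k) (by omega) (by omega)
    simp only [fwd2]
    rw [if_pos hx, if_pos hy]
    constructor
    · intro h
      split_ifs at h <;> omega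
    · intro h
      rw [h]
  refine ⟨?_, ?_, ?_, ?_⟩
  · intro i
    unfold fwd2
    split
    · have := hle (i+k); split <;> omega
    · omega
  · intro i
    by_cases h : i + k ≤ n
    · rcases big (i+k) (by omega) (by omega) with h0 | h0
      · have e : fwd2 f k n i = 0 := by rw [fwd2, if_pos h, if_pos h0]; omega
        rw [e, fwd2_zero hk3]
      · have hv : f (i+k) ≤ i + k := hle _
        have e : fwd2 f k n i = f (i+k) - k := by
          rw [fwd2, if_pos h, if_neg (by omega)]
        rw [e]
        have h2 : f (i+k) - k + k = f (i+k) := by omega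
        show (if f (i+k) - k + k ≤ n then
            (if f (f (i+k) - k + k) = 0 then k else f (f (i+k) - k + k)) - k else 0) = f (i+k) - k
        rw [h2, if_pos (by omega), hid, if_neg (by omega)]
    · have e : fwd2 f k n i = 0 := if_neg h
      rw [e, fwd2_zero hk3]
  · intro i hi
    exact if_neg (by omega)
  · intro a b c d hab hbc hcd hd hac hbd
    have hd' : d + k ≤ n := by omega
    have hac' : f (a+k) = f (c+k) := (equiv _ _ (by omega) (by omega)).1 hac
    have hbd' : f (b+k) = f (d+k) := (equiv _ _ (by omega) (by omega)).1 hbd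
    have := hnc (a+k) (b+k) (c+k) (d+k) (by omega) (by omega) (by omega) (by omega) hac' hbd'
    exact (equiv _ _ (by omega) (by omega)).2 this

lemma ncfun_bwd (hk1 : 1 ≤ k) (hk2 : k ≤ n+1)
    (hg1 : NCFun (k-1) g1) (hg2 : NCFun (n+1-k) g2) :
    NCFun (n+1) (bwd k n g1 g2) := by
  obtain ⟨le1, id1, z1, nc1⟩ := hg1
  obtain ⟨le2, id2, z2, nc2⟩ := hg2
  set F := bwd k n g1 g2 with hF
  have hF0 : F 0 = 0 := by simp [hF, bwd]
  have hFL : ∀ i, 0 < i → i < k → F i = g1 (i-1) + 1 := by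
    intro i h1 h2
    simp only [hF, bwd, if_neg (by omega : ¬ i = 0), if_pos h2]
  have hFR : ∀ i, k ≤ i → i ≤ n →
      F i = if g2 (i-k) = 0 then 0 else g2 (i-k) + k := by
    intro i h1 h2
    simp only [hF, bwd, if_neg (by omega : ¬ i = 0), if_neg (by omega : ¬ i < k), if_pos h2]
  have hFZ : ∀ i, n+1 ≤ i → F i = 0 := by
    intro i h1
    simp only [hF, bwd, if_neg (by omega : ¬ i = 0), if_neg (by omega : ¬ i < k),
      if_neg (by omega : ¬ i ≤ n)]
  have rngL : ∀ i, 0 < i → i < k → 0 < F i ∧ F i ≤ i ∧ F i < k := by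
    intro i h1 h2
    rw [hFL i h1 h2]
    have := le1 (i-1)
    omega
  have rngR : ∀ i, k ≤ i → i ≤ n → F i = 0 ∨ (k < F i ∧ F i ≤ i) := by
    intro i h1 h2
    rw [hFR i h1 h2]
    have := le2 (i-k)
    split <;> omega
  refine ⟨?_, ?_, ?_, ?_⟩
  · intro i
    rcases Nat.eq_zero_or_pos i with h|h
    · rw [h, hF0]
    rcases lt_or_ge i k with h2|h2
    · have := rngL i h h2; omega
    rcases le_or_gt i n with h3|h3
    · have := rngR i h2 h3; omega
    · rw [hFZ i (by omega)]; omega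
  · intro i
    rcases Nat.eq_zero_or_pos i with h|h
    · rw [h, hF0, hF0]
    rcases lt_or_ge i k with h2|h2
    · have hv := rngL i h h2
      rw [hFL i h h2] at hv ⊢
      rw [hFL _ (by omega) (by omega : g1 (i-1) + 1 < k)]
      have : g1 (i-1) + 1 - 1 = g1 (i-1) := by omega
      rw [this, id1]
    rcases le_or_gt i n with h3|h3
    · rw [hFR i h2 h3]
      rcases eq_or_ne (g2 (i-k)) 0 with h4|h4
      · rw [if_pos h4, hF0]
      · rw [if_neg h4]
        have hv := le2 (i-k)
        rw [hFR _ (by omega) (by omega)]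
        have e : g2 (i-k) + k - k = g2 (i-k) := by omega
        rw [e, id2, if_neg h4]
    · rw [hFZ i (by omega), hF0]
  · intro i hi
    exact hFZ i hi
  · intro a b c d hab hbc hcd hd hac hbd
    by_cases hck : c < k
    · have hcv := rngL c (by omega) hck
      have hapos : 0 < a := by
        by_contra hcon
        have ha0 : a = 0 := by omega
        rw [ha0, hF0] at hac
        omega
      by_cases hdk : d < k
      · have ea := hFL a hapos (by omega)
        have eb := hFL b (by omega) (by omega)
        have ec := hFL c (by omega) hck
        have ed := hFL d (by omega) hdk
        rw [ea, ec] at hac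
        rw [eb, ed] at hbd
        have := nc1 (a-1) (b-1) (c-1) (d-1) (by omega) (by omega) (by omega) (by omega)
          (by omega) (by omega)
        rw [ea, eb]
        omega
      · have hdv := rngR d (by omega) (by omega)
        have hbv := rngL b (by omega) (by omega)
        omega
    · -- c ≥ k, c ≤ n
      have hcn : c ≤ n := by omega
      have h02 : g2 0 = 0 := Nat.le_zero.1 (le2 0)
      by_cases ha0 : a = 0
      · have hFc : F c = 0 := by rw [← hac, ha0, hF0]
        have hc2 : g2 (c-k) = 0 := by
          rcases eq_or_ne (g2 (c-k)) 0 with h|h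
          · exact h
          · rw [hFR c (by omega) hcn, if_neg h] at hFc; omega
        rw [ha0, hF0]
        by_cases hbk : b < k
        · have hbv := rngL b (by omega) hbk
          have hdv := rngR d (by omega) (by omega)
          omega
        · have eb := hFR b (by omega) (by omega)
          have ed := hFR d (by omega) (by omega)
          have hbd2 : g2 (b-k) = g2 (d-k) := by
            rw [eb, ed] at hbd
            split_ifs at hbd <;> omega
          rcases Nat.eq_zero_or_pos (b - k) with hb'|hb'
          · have hz : g2 (b-k) = 0 := by rw [hb']; exact h02
            rw [eb, if_pos hz]
          · have := nc2 0 (b-k) (c-k) (d-k) hb' (by omega) (by omega) (by omega)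
              (by rw [h02, hc2]) hbd2
            have hz : g2 (b-k) = 0 := by omega
            rw [eb, if_pos hz]
      · by_cases hak : a < k
        · have hav := rngL a (by omega) hak
          have hcv := rngR c (by omega) hcn
          omega
        · have ea := hFR a (by omega) (by omega)
          have eb := hFR b (by omega) (by omega)
          have ec := hFR c (by omega) hcn
          have ed := hFR d (by omega) (by omega)
          have hac2 : g2 (a-k) = g2 (c-k) := by
            rw [ea, ec] at hac
            split_ifs at hac <;> omega
          have hbd2 : g2 (b-k) = g2 (d-k) := by
            rw [eb, ed] at hbd
            split_ifs at hbd <;> omega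
          have := nc2 (a-k) (b-k) (c-k) (d-k) (by omega) (by omega) (by omega) (by omega)
            hac2 hbd2
          rw [ea, eb, this]

end recurrence

section roundtrip

variable {n k : ℕ} {f g1 g2 : ℕ → ℕ}

lemma bwd_zero : bwd k n g1 g2 0 = 0 := by simp [bwd]

lemma bwd_L {i : ℕ} (h1 : 0 < i) (h2 : i < k) : bwd k n g1 g2 i = g1 (i-1) + 1 := by
  simp only [bwd, if_neg (by omega : ¬ i = 0), if_pos h2]

lemma bwd_R {i : ℕ} (hk1 : 1 ≤ k) (h1 : k ≤ i) (h2 : i ≤ n) :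
    bwd k n g1 g2 i = if g2 (i-k) = 0 then 0 else g2 (i-k) + k := by
  simp only [bwd, if_neg (by omega : ¬ i = 0), if_neg (by omega : ¬ i < k), if_pos h2]

lemma bwd_Z {i : ℕ} (hk2 : k ≤ n + 1) (h1 : n + 1 ≤ i) : bwd k n g1 g2 i = 0 := by
  simp only [bwd, if_neg (by omega : ¬ i = 0), if_neg (by omega : ¬ i < k),
    if_neg (by omega : ¬ i ≤ n)]

def kOf (f : ℕ → ℕ) (n : ℕ) : ℕ :=
  if h : ((Finset.Ioc 0 n).filter (fun j => f j = 0)).Nonempty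
  then ((Finset.Ioc 0 n).filter (fun j => f j = 0)).min' h else n+1

lemma kOf_pos : 1 ≤ kOf f n := by
  unfold kOf
  split
  · rename_i h
    have := min'_mem _ h
    rw [mem_filter, mem_Ioc] at this
    omega
  · omega

lemma kOf_le : kOf f n ≤ n + 1 := by
  unfold kOf
  split
  · rename_i h
    have := min'_mem _ h
    rw [mem_filter, mem_Ioc] at this
    omega
  · omega

lemma kOf_zero (h : kOf f n ≤ n) : f (kOf f n) = 0 := by
  revert h
  unfold kOf
  split
  · rename_i h
    have := min'_mem _ h
    rw [mem_filter, mem_Ioc] at this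
    intro
    exact this.2
  · intro h
    omega

lemma kOf_min {j : ℕ} (h1 : 0 < j) (h2 : j < kOf f n) : f j ≠ 0 := by
  intro hj0
  have hjn : j ≤ n := by have := kOf_le (f := f) (n := n); omega
  have hmem : j ∈ (Finset.Ioc 0 n).filter (fun j => f j = 0) := by
    rw [mem_filter, mem_Ioc]; exact ⟨⟨h1, hjn⟩, hj0⟩
  have hne : ((Finset.Ioc 0 n).filter (fun j => f j = 0)).Nonempty := ⟨j, hmem⟩
  have : kOf f n ≤ j := by
    unfold kOf
    rw [dif_pos hne]
    exact min'_le _ _ hmem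
  omega

lemma kOf_eq (hk1 : 1 ≤ k) (hk2 : k ≤ n + 1) (hk3 : k ≤ n → f k = 0)
    (hk4 : ∀ j, 0 < j → j < k → f j ≠ 0) : kOf f n = k := by
  rcases le_or_gt k n with h | h
  · have hmem : k ∈ (Finset.Ioc 0 n).filter (fun j => f j = 0) := by
      rw [mem_filter, mem_Ioc]; exact ⟨⟨by omega, h⟩, hk3 h⟩
    have hne : ((Finset.Ioc 0 n).filter (fun j => f j = 0)).Nonempty := ⟨k, hmem⟩
    unfold kOf
    rw [dif_pos hne]
    have h1 := min'_le _ _ hmem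
    have h2 := min'_mem _ hne
    rw [mem_filter, mem_Ioc] at h2
    by_contra hcon
    exact hk4 _ h2.1.1 (by omega) h2.2
  · have hk : k = n + 1 := by omega
    have hne : ¬ ((Finset.Ioc 0 n).filter (fun j => f j = 0)).Nonempty := by
      rintro ⟨j, hj⟩
      rw [mem_filter, mem_Ioc] at hj
      exact hk4 j hj.1.1 (by omega) hj.2
    unfold kOf
    rw [dif_neg hne, hk]

lemma bwd_fwd (hf : NCFun (n+1) f) (hk1 : 1 ≤ k) (hk2 : k ≤ n+1) (hk3 : k ≤ n → f k = 0)
    (hk4 : ∀ j, 0 < j → j < k → f j ≠ 0) :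
    bwd k n (fwd1 f k) (fwd2 f k n) = f := by
  have big : ∀ j, k ≤ j → j ≤ n → f j = 0 ∨ k < f j := fun j hj hjn => ncfun_big hf hk3 hj hjn
  obtain ⟨hle, hid, hz, hnc⟩ := hf
  funext i
  rcases Nat.eq_zero_or_pos i with h | h
  · rw [h, bwd_zero]
    have := hle 0; omega
  rcases lt_or_ge i k with h2 | h2
  · rw [bwd_L h h2]
    have e : i - 1 + 1 = i := by omega
    rw [fwd1, e, if_pos (by omega)]
    have := hk4 i h h2
    have := hle i
    omega
  rcases le_or_gt i n with h3 | h3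
  · rw [bwd_R hk1 h2 h3]
    have e1 : fwd2 f k n (i - k) = (if f i = 0 then k else f i) - k := by
      have e : i - k + k = i := by omega
      simp only [fwd2, e, if_pos h3]
    rw [e1]
    rcases big i h2 h3 with h4 | h4
    · rw [h4]; simp
    · rw [if_neg (by omega : ¬ f i = 0), if_neg (by omega : ¬ f i - k = 0)]
      omega
  · rw [bwd_Z hk2 (by omega)]
    exact (hz i (by omega)).symm

lemma kOf_bwd (hk1 : 1 ≤ k) (hk2 : k ≤ n+1) (hg1 : NCFun (k-1) g1)
    (hg2 : NCFun (n+1-k) g2) : kOf (bwd k n g1 g2) n = k := by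
  apply kOf_eq hk1 hk2
  · intro h
    rw [bwd_R hk1 (le_refl k) h]
    rw [Nat.sub_self]
    rw [Nat.le_zero.1 (hg2.1 0)]
    simp
  · intro j h1 h2
    rw [bwd_L h1 h2]
    omega

lemma fwd1_bwd (hg1 : NCFun (k-1) g1) : fwd1 (bwd k n g1 g2) k = g1 := by
  funext i
  unfold fwd1
  by_cases h : i + 1 < k
  · rw [if_pos h, bwd_L (by omega) h]
    simp
  · rw [if_neg h]
    exact (hg1.2.2.1 i (by omega)).symm

lemma fwd2_bwd (hk1 : 1 ≤ k) (hk2 : k ≤ n+1) (hg2 : NCFun (n+1-k) g2) :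
    fwd2 (bwd k n g1 g2) k n = g2 := by
  funext i
  unfold fwd2
  by_cases h : i + k ≤ n
  · rw [if_pos h, bwd_R hk1 (by omega) (by omega)]
    have e : i + k - k = i := by omega
    rw [e]
    rcases eq_or_ne (g2 i) 0 with h0 | h0
    · rw [h0]; simp
    · rw [if_neg h0, if_neg (by omega)]
      omega
  · rw [if_neg h]
    exact (hg2.2.2.1 i (by omega)).symm

end roundtrip

lemma card_NCRep (n : ℕ) : Nat.card (NCRep n) = catalan n := by
  induction n using Nat.strong_induction_on with
  | _ n ih =>
    match n with
    | 0 =>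
      rw [catalan_zero]
      rw [Nat.card_eq_one_iff_exists]
      refine ⟨⟨fun _ => 0, ⟨fun i => Nat.zero_le i, fun i => rfl, fun i _ => rfl,
        fun a b c d _ _ _ _ _ _ => rfl⟩⟩, fun y => ?_⟩
      exact Subtype.ext (funext fun i => y.2.2.2.1 i (Nat.zero_le i))
    | n + 1 =>
      have hg1' : ∀ (j : Fin (n+1)) (g : NCRep j), NCFun ((j+1:ℕ)-1) g.1 := by
        intro j g
        have e : (j+1:ℕ)-1 = (j:ℕ) := by omega
        rw [e]; exact g.2
      have hg2' : ∀ (j : Fin (n+1)) (g : NCRep (n - j)), NCFun (n+1-((j:ℕ)+1)) g.1 := by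
        intro j g
        have e : n+1-((j:ℕ)+1) = n - (j:ℕ) := by omega
        rw [e]; exact g.2
      set G : (Σ j : Fin (n+1), NCRep j × NCRep (n - j)) → NCRep (n+1) :=
        fun x => ⟨bwd ((x.1:ℕ)+1) n x.2.1.1 x.2.2.1,
          ncfun_bwd (by omega) (by omega) (hg1' x.1 x.2.1) (hg2' x.1 x.2.2)⟩ with hG
      have hbij : Function.Bijective G := by
        constructor
        · rintro ⟨⟨j, hj⟩, ⟨g1, hg1⟩, ⟨g2, hg2⟩⟩ ⟨⟨j', hj'⟩, ⟨g1', hg1''⟩, ⟨g2', hg2''⟩⟩ h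
          have hfun : bwd (j+1) n g1 g2 = bwd (j'+1) n g1' g2' := congrArg Subtype.val h
          have hk : j + 1 = j' + 1 := by
            have e1 : kOf (bwd (j+1) n g1 g2) n = j + 1 :=
              kOf_bwd (by omega) (by omega) (hg1' ⟨j, hj⟩ ⟨g1, hg1⟩) (hg2' ⟨j, hj⟩ ⟨g2, hg2⟩)
            have e2 : kOf (bwd (j'+1) n g1' g2') n = j' + 1 :=
              kOf_bwd (by omega) (by omega) (hg1' ⟨j', hj'⟩ ⟨g1', hg1''⟩)
                (hg2' ⟨j', hj'⟩ ⟨g2', hg2''⟩)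
            rw [← e1, ← e2, hfun]
          have hjj : j = j' := by omega
          subst hjj
          have e1 : g1 = g1' := by
            have a1 : fwd1 (bwd (j+1) n g1 g2) (j+1) = g1 := fwd1_bwd (hg1' ⟨j, hj⟩ ⟨g1, hg1⟩)
            have a2 : fwd1 (bwd (j+1) n g1' g2') (j+1) = g1' :=
              fwd1_bwd (hg1' ⟨j, hj⟩ ⟨g1', hg1''⟩)
            rw [← a1, ← a2, hfun]
          have e2 : g2 = g2' := by
            have a1 : fwd2 (bwd (j+1) n g1 g2) (j+1) n = g2 :=
              fwd2_bwd (by omega) (by omega) (hg2' ⟨j, hj⟩ ⟨g2, hg2⟩)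
            have a2 : fwd2 (bwd (j+1) n g1' g2') (j+1) n = g2' :=
              fwd2_bwd (by omega) (by omega) (hg2' ⟨j, hj⟩ ⟨g2', hg2''⟩)
            rw [← a1, ← a2, hfun]
          subst e1
          subst e2
          rfl
        · rintro ⟨f, hf⟩
          set k := kOf f n with hkdef
          have hk1 : 1 ≤ k := kOf_pos
          have hk2 : k ≤ n + 1 := kOf_le
          have hk3 : k ≤ n → f k = 0 := fun h => kOf_zero h
          have hk4 : ∀ j, 0 < j → j < k → f j ≠ 0 := fun j h1 h2 => kOf_min h1 h2
          have hfw1 : NCFun ((k - 1 : ℕ)) (fwd1 f k) := ncfun_fwd1 hf hk2 hk4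
          have hfw2 : NCFun (n - (k - 1)) (fwd2 f k n) := by
            have e : n - (k - 1) = n + 1 - k := by omega
            rw [e]; exact ncfun_fwd2 hf hk3
          refine ⟨⟨⟨k - 1, by omega⟩, ⟨⟨fwd1 f k, ?_⟩, ⟨fwd2 f k n, ?_⟩⟩⟩, ?_⟩
          · exact hfw1
          · exact hfw2
          · apply Subtype.ext
            show bwd ((k-1)+1) n (fwd1 f k) (fwd2 f k n) = f
            have e : (k-1)+1 = k := by omega
            rw [e]
            exact bwd_fwd hf hk1 hk2 hk3 hk4
      have hcard := Nat.card_eq_of_bijective G hbij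
      rw [← hcard]
      letI : ∀ m : ℕ, Fintype (NCRep m) := fun m => Fintype.ofFinite _
      rw [Nat.card_eq_fintype_card, Fintype.card_sigma]
      rw [catalan_succ]
      apply Finset.sum_congr rfl
      intro j _
      rw [Fintype.card_prod, ← Nat.card_eq_fintype_card, ← Nat.card_eq_fintype_card]
      rw [ih j (by omega), ih (n - j) (by omega)]

/-- The number of noncrossing partitions of `{1,…,n}` is the `n`-th Catalan number
`C(2n, n) / (n+1)`. -/
theorem card_noncrossing_partitions (n : ℕ) :
    Nat.card {P : Finpartition (Finset.univ : Finset (Fin n)) // IsNoncrossing P} =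
      Nat.choose (2 * n) n / (n + 1) := by
  rw [Nat.card_congr (ncEquivRep n), card_NCRep, catalan_eq_centralBinom_div, Nat.centralBinom]
end

section
/- Let f_{A_n}(x) = Σ_k (1/(k+1)) C(n,k) C(n+k+2,k) x^k. Then (1-y)^n · f_{A_n}(y/(1-y)) = Σ_{k=0}^{n} [1/(n+1)]·C(n+1,k)·C(n+1,k+1) y^k, i.e. the h-vector specialization gives the Narayana numbers. -/
open Finset

theorem keyL (n k : ℕ) (hk : k ≤ n) :
    Nat.choose (n+1) (k+1) * Nat.choose (n+k+2) k =
      ∑ j ∈ range (k+1), Nat.choose (n+1) j * Nat.choose (n+1) (j+1) * Nat.choose (n-j) (k-j) := by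
  have step : ∀ j ∈ range (k+1),
      Nat.choose (n+1) j * Nat.choose (n+1) (j+1) * Nat.choose (n-j) (k-j)
        = Nat.choose (n+1) (k+1) * (Nat.choose (n+1) j * Nat.choose (k+1) (k-j)) := by
    intro j hj
    rw [mem_range] at hj
    have hj' : j ≤ k := Nat.lt_succ_iff.mp hj
    have h1 : Nat.choose (n+1) (k+1) * Nat.choose (k+1) (j+1)
        = Nat.choose (n+1) (j+1) * Nat.choose (n-j) (k-j) := by
      have := Nat.choose_mul (n := n+1) (k := k+1) (s := j+1)
        (Nat.succ_le_succ hj')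
      simpa [Nat.succ_sub_succ] using this
    have h2 : Nat.choose (k+1) (j+1) = Nat.choose (k+1) (k-j) := by
      rw [← Nat.choose_symm (Nat.succ_le_succ hj')]
      congr 1
      omega
    rw [mul_assoc, ← h1, h2]
    ring
  rw [Finset.sum_congr rfl step, ← Finset.mul_sum]
  congr 1
  have := Nat.add_choose_eq (n+1) (k+1) k
  rw [Finset.Nat.sum_antidiagonal_eq_sum_range_succ_mk] at this
  have h3 : n + 1 + (k + 1) = n + k + 2 := by omega
  rw [h3] at this
  simpa using this

/-- The `h`-vector specialization of the type `A_n` f-vector gives the Narayana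
numbers: `Σ_k (1/(k+1)) C(n,k) C(n+k+2,k) y^k (1-y)^{n-k}
  = Σ_k (1/(n+1)) C(n+1,k) C(n+1,k+1) y^k`. -/
theorem h_vector_typeA_narayana (n : ℕ) (y : ℚ) :
    ∑ k ∈ range (n + 1),
        ((1 : ℚ) / (k + 1)) * (Nat.choose n k) * (Nat.choose (n + k + 2) k) *
          y ^ k * (1 - y) ^ (n - k) =
      ∑ k ∈ range (n + 1),
        ((1 : ℚ) / (n + 1)) * (Nat.choose (n + 1) k) * (Nat.choose (n + 1) (k + 1)) *
          y ^ k := by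
  have hn1 : ((n : ℚ) + 1) ≠ 0 := by positivity
  -- Step 1+2: rewrite each term using (1/(k+1))C(n,k) = (1/(n+1))C(n+1,k+1) and keyL
  have step1 : ∀ k ∈ range (n+1),
      ((1 : ℚ) / (k + 1)) * (Nat.choose n k) * (Nat.choose (n + k + 2) k) *
          y ^ k * (1 - y) ^ (n - k)
        = ∑ j ∈ range (k+1), ((1 : ℚ)/(n+1)) * (Nat.choose (n+1) j) * (Nat.choose (n+1) (j+1))
            * (Nat.choose (n-j) (k-j)) * y ^ k * (1 - y) ^ (n - k) := by
    intro k hk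
    rw [mem_range] at hk
    have hk' : k ≤ n := Nat.lt_succ_iff.mp hk
    have hq : ((n : ℚ) + 1) * (Nat.choose n k) = (Nat.choose (n+1) (k+1)) * ((k : ℚ) + 1) := by
      exact_mod_cast congrArg (Nat.cast (R := ℚ)) (Nat.add_one_mul_choose_eq n k)
    have hkey : ((Nat.choose (n+1) (k+1) * Nat.choose (n+k+2) k : ℕ) : ℚ)
        = ((∑ j ∈ range (k+1),
            Nat.choose (n+1) j * Nat.choose (n+1) (j+1) * Nat.choose (n-j) (k-j) : ℕ) : ℚ) := by
      exact_mod_cast congrArg (Nat.cast (R := ℚ)) (keyL n k hk')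
    push_cast at hkey
    have hk1 : ((k : ℚ) + 1) ≠ 0 := by positivity
    have lhs_eq : ((1 : ℚ) / (k + 1)) * (Nat.choose n k) * (Nat.choose (n + k + 2) k) *
          y ^ k * (1 - y) ^ (n - k)
        = ((1 : ℚ)/(n+1)) * ((Nat.choose (n+1) (k+1)) * (Nat.choose (n+k+2) k))
            * (y ^ k * (1 - y) ^ (n - k)) := by
      field_simp
      linear_combination ((Nat.choose (n+k+2) k : ℚ) * y ^ k * (1 - y) ^ (n - k)) * hq
    rw [lhs_eq, hkey, Finset.mul_sum, Finset.sum_mul]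
    exact Finset.sum_congr rfl fun j _ => by ring
  rw [Finset.sum_congr rfl step1]
  have binom : ∀ N : ℕ, ∑ m ∈ range (N+1), (Nat.choose N m : ℚ) * y ^ m * (1-y) ^ (N-m) = 1 := by
    intro N
    have h := add_pow y (1 - y) N
    have h1 : y + (1 - y) = 1 := by ring
    rw [h1, one_pow] at h
    refine (Finset.sum_congr rfl fun m _ => ?_).trans h.symm
    ring
  -- swap the double sum
  simp only [Finset.range_eq_Ico]
  rw [← Finset.sum_Ico_Ico_comm 0 (n+1)
    (fun j k => ((1 : ℚ)/(n+1)) * (Nat.choose (n+1) j) * (Nat.choose (n+1) (j+1))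
      * (Nat.choose (n-j) (k-j)) * y ^ k * (1 - y) ^ (n - k))]
  rw [← Finset.range_eq_Ico]
  refine Finset.sum_congr rfl fun j hj => ?_
  rw [mem_range] at hj
  have hj' : j ≤ n := Nat.lt_succ_iff.mp hj
  rw [Finset.sum_Ico_eq_sum_range]
  have hrange : n + 1 - j = (n - j) + 1 := by omega
  rw [hrange]
  have e : ∀ i ∈ range ((n-j)+1),
      ((1 : ℚ)/(n+1)) * (Nat.choose (n+1) j) * (Nat.choose (n+1) (j+1))
        * (Nat.choose (n-j) ((j+i)-j)) * y ^ (j+i) * (1 - y) ^ (n - (j+i))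
      = (((1 : ℚ)/(n+1)) * (Nat.choose (n+1) j) * (Nat.choose (n+1) (j+1)) * y ^ j)
          * ((Nat.choose (n-j) i : ℚ) * y ^ i * (1-y) ^ ((n-j) - i)) := by
    intro i _
    rw [Nat.add_sub_cancel_left, show n - (j+i) = (n-j) - i by omega, pow_add]
    ring
  rw [Finset.sum_congr rfl e, ← Finset.mul_sum, binom (n-j)]
  ring
end

section
/- For all nonnegative integers n: Σ_{k=0}^{n} Σ_{ℓ=0}^{n-k} (-1)^{n+k+ℓ} C(k,i) C(ℓ,j) · [(ℓ+1)/(k+ℓ+1)] C(n,k+ℓ) C(n+k,n) = [(j+1)/(i+j+1)] C(n,i+j) C(n+i,n), for all 0 ≤ i, j with i+j ≤ n. -/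
/-!
Absorbing `(ℓ + 1) / (k + ℓ + 1)` into the binomial coefficients
(`(ℓ + 1) C(ℓ, j) = (j + 1) C(ℓ + 1, j + 1)`, `C(n, m) / (m + 1) = C(n + 1, m + 1) / (n + 1)`) and
using trinomial revision `C(n + k, n) C(k, i) = C(n + i, n) C(n + k, n + i)` reduces the identity to
`∑ (-1)^(n+k+ℓ) C(n + k, n + i) C(ℓ + 1, j + 1) C(n + 1, k + ℓ + 1) = C(n + 1, i + j + 1)`.
With `k = i + u`, `ℓ = j + v` and `d = n - i - j`, the three factors are, up to the sign `(-1)^d`,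
the coefficients of `x^u`, `x^v`, `x^(d-u-v)` in `(1+x)^(-(n+i+1))`, `(1+x)^(-(j+2))` and
`(1+x)^(n+1)`.
So the sum is `(-1)^d` times the coefficient of `x^d` in `(1+x)^(-(i+j+2))`, which is
`C(n + 1, d) = C(n + 1, i + j + 1)`: Chu–Vandermonde applied twice in the binomial ring `ℤ`.
-/

open Finset

section Triangle

variable {M : Type*} [AddCommMonoid M]

theorem sum_range_sum_range_sub_shift_left (N i : ℕ) (g : ℕ → ℕ → M) (hi : i ≤ N)
    (hg : ∀ k < i, ∀ ℓ, g k ℓ = 0) :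
    ∑ k ∈ range N, ∑ ℓ ∈ range (N - k), g k ℓ =
      ∑ u ∈ range (N - i), ∑ ℓ ∈ range (N - i - u), g (i + u) ℓ := by
  obtain ⟨N, rfl⟩ := Nat.exists_eq_add_of_le hi
  rw [sum_range_add, sum_eq_zero fun k hk => sum_eq_zero fun ℓ _ => hg k (mem_range.1 hk) ℓ,
    zero_add]
  simp only [Nat.add_sub_cancel_left, Nat.add_sub_add_left]

theorem sum_range_sum_range_sub_shift_right (N j : ℕ) (g : ℕ → ℕ → M) (hj : j ≤ N)
    (hg : ∀ k, ∀ ℓ < j, g k ℓ = 0) :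
    ∑ k ∈ range N, ∑ ℓ ∈ range (N - k), g k ℓ =
      ∑ k ∈ range (N - j), ∑ v ∈ range (N - j - k), g k (j + v) := by
  obtain ⟨N, rfl⟩ := Nat.exists_eq_add_of_le' hj
  have tail : ∑ t ∈ range j, ∑ ℓ ∈ range (N + j - (N + t)), g (N + t) ℓ = 0 :=
    sum_eq_zero fun t _ => sum_eq_zero fun ℓ hℓ => hg _ _ (by rw [mem_range] at hℓ; omega)
  rw [sum_range_add, tail, add_zero, Nat.add_sub_cancel]
  refine sum_congr rfl fun k hk => ?_
  rw [show N + j - k = j + (N - k) by rw [mem_range] at hk; omega, sum_range_add,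
    sum_eq_zero fun ℓ hℓ => hg k ℓ (mem_range.1 hℓ), zero_add]

end Triangle

namespace Ring

variable {R : Type*} [CommRing R] [BinomialRing R]

theorem sum_range_choose_mul_choose (r s : R) (d : ℕ) :
    ∑ u ∈ range (d + 1), choose r u * choose s (d - u) = choose (r + s) d := by
  rw [add_choose_eq d (Commute.all r s), Nat.sum_antidiagonal_eq_sum_range_succ_mk]

theorem sum_range_sum_range_choose_mul_choose_mul_choose (a b c : R) (d : ℕ) :
    ∑ u ∈ range (d + 1), ∑ v ∈ range (d + 1 - u),
        choose a u * choose b v * choose c (d - u - v) = choose (a + b + c) d := by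
  rw [add_assoc, ← sum_range_choose_mul_choose]
  refine sum_congr rfl fun u hu => ?_
  rw [← sum_range_choose_mul_choose, mul_sum,
    Nat.sub_add_comm (Nat.lt_succ_iff.1 (mem_range.1 hu))]
  simp only [mul_assoc]

theorem choose_neg_natCast_add_one (a u : ℕ) :
    choose (-(a + 1 : R)) u = (-1) ^ u * (a + u).choose u := by
  rw [choose_neg, show (a + 1 : R) + u - 1 = ((a + u : ℕ) : R) by push_cast; ring,
    choose_natCast, Units.smul_def, Int.coe_negOnePow_natCast, zsmul_eq_mul]
  push_cast
  rfl

end Ring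

theorem sum_range_sum_range_neg_one_pow_mul_choose (n i j : ℕ) (hij : i + j ≤ n) :
    ∑ k ∈ range (n + 1), ∑ ℓ ∈ range (n + 1 - k),
        (-1 : ℤ) ^ (n + k + ℓ) * (n + k).choose (n + i) * (ℓ + 1).choose (j + 1) *
          (n + 1).choose (k + ℓ + 1) =
      (n + 1).choose (i + j + 1) := by
  obtain ⟨d, hd⟩ := Nat.exists_eq_add_of_le hij
  rw [sum_range_sum_range_sub_shift_left (n + 1) i _ (by omega) fun k hk ℓ => by
      rw [Nat.choose_eq_zero_of_lt (by omega : n + k < n + i)]; ring,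
    sum_range_sum_range_sub_shift_right (n + 1 - i) j _ (by omega) fun k ℓ hℓ => by
      rw [Nat.choose_eq_zero_of_lt (by omega : ℓ + 1 < j + 1)]; ring,
    show n + 1 - i - j = d + 1 by omega]
  have negative_binomial : ∀ u ∈ range (d + 1), ∀ v ∈ range (d + 1 - u),
      (-1 : ℤ) ^ (n + (i + u) + (j + v)) * (n + (i + u)).choose (n + i) *
          (j + v + 1).choose (j + 1) * (n + 1).choose (i + u + (j + v) + 1) =
        (-1) ^ d * (Ring.choose (-((n + i : ℕ) + 1 : ℤ)) u *
          Ring.choose (-((j + 1 : ℕ) + 1 : ℤ)) v * Ring.choose ((n + 1 : ℕ) : ℤ) (d - u - v)) := by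
    intro u hu v hv
    simp only [mem_range] at hu hv
    rw [show n + (i + u) + (j + v) = d + u + v + 2 * (i + j) by omega,
      Ring.choose_neg_natCast_add_one, Ring.choose_neg_natCast_add_one, Ring.choose_natCast,
      ← add_assoc n i u, Nat.choose_symm_add, add_right_comm j v, Nat.choose_symm_add,
      Nat.choose_symm_of_eq_add (show n + 1 = i + u + (j + v) + 1 + (d - u - v) by omega)]
    simp only [pow_add, pow_mul, neg_one_sq, one_pow]
    ring
  rw [sum_congr rfl fun u hu => sum_congr rfl (negative_binomial u hu)]
  simp only [← mul_sum]
  rw [Ring.sum_range_sum_range_choose_mul_choose_mul_choose,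
    show -((n + i : ℕ) + 1 : ℤ) + -((j + 1 : ℕ) + 1) + (n + 1 : ℕ) = -((i + j + 1 : ℕ) + 1) by
      push_cast; omega,
    Ring.choose_neg_natCast_add_one, ← mul_assoc, ← pow_add, Even.neg_one_pow ⟨d, rfl⟩, one_mul,
    ← Nat.choose_symm_add, show i + j + 1 + d = n + 1 by omega]

theorem Nat.cast_choose_div_add_one {K : Type*} [Field K] [CharZero K] (m r : ℕ) :
    (m.choose r : K) / (r + 1) = ((m + 1).choose (r + 1) : K) / (m + 1) := by
  rw [div_eq_div_iff (Nat.cast_add_one_ne_zero r) (Nat.cast_add_one_ne_zero m), mul_comm]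
  exact_mod_cast Nat.add_one_mul_choose_eq m r

theorem fTriangle_typeA_term_eq (n i j k ℓ : ℕ) :
    (-1 : ℚ) ^ (n + k + ℓ) * k.choose i * ℓ.choose j *
        ((ℓ + 1 : ℚ) / (k + ℓ + 1) * n.choose (k + ℓ) * (n + k).choose n) =
      (j + 1) / (n + 1) * (n + i).choose n *
        ((-1) ^ (n + k + ℓ) * (n + k).choose (n + i) * (ℓ + 1).choose (j + 1) *
          (n + 1).choose (k + ℓ + 1)) := by
  have revision :
      ((n + k).choose n * k.choose i : ℚ) = (n + k).choose (n + i) * (n + i).choose n := by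
    have := Nat.choose_mul (n := n + k) (Nat.le_add_right n i)
    simp only [Nat.add_sub_cancel_left] at this
    exact_mod_cast this.symm
  have absorb_j : ((ℓ + 1) * ℓ.choose j : ℚ) = (ℓ + 1).choose (j + 1) * (j + 1) := by
    exact_mod_cast Nat.add_one_mul_choose_eq ℓ j
  have absorb_n := Nat.cast_choose_div_add_one (K := ℚ) n (k + ℓ)
  push_cast at absorb_n
  calc _ = (-1 : ℚ) ^ (n + k + ℓ) * ((n + k).choose n * k.choose i) * ((ℓ + 1) * ℓ.choose j) *
        (n.choose (k + ℓ) / (k + ℓ + 1)) := by ring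
    _ = _ := by rw [revision, absorb_j, absorb_n]; ring

/-- Coefficientwise form of the refined Dehn–Sommerville relations for the explicit
type `A_n` F-triangle coefficients `f_{k,ℓ} = (ℓ+1)/(k+ℓ+1) · C(n,k+ℓ) · C(n+k,n)`. -/
theorem dehn_sommerville_coefficients_typeA (n i j : ℕ) (hij : i + j ≤ n) :
    ∑ k ∈ range (n + 1), ∑ ℓ ∈ range (n + 1 - k),
        (-1 : ℚ) ^ (n + k + ℓ) * (Nat.choose k i) * (Nat.choose ℓ j) *
          (((ℓ + 1 : ℚ) / (k + ℓ + 1)) * (Nat.choose n (k + ℓ)) * (Nat.choose (n + k) n)) =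
      ((j + 1 : ℚ) / (i + j + 1)) * (Nat.choose n (i + j)) * (Nat.choose (n + i) n) := by
  have core :=
    congrArg (Int.cast : ℤ → ℚ) (sum_range_sum_range_neg_one_pow_mul_choose n i j hij)
  push_cast at core
  have absorb := Nat.cast_choose_div_add_one (K := ℚ) n (i + j)
  push_cast at absorb
  simp_rw [fTriangle_typeA_term_eq, ← mul_sum]
  rw [core]
  linear_combination (j + 1 : ℚ) * (n + i).choose n * absorb.symm
end
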